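/- arXiv:1812.08557 — 5 statements merged into one kernel-verified Lean document; each statement's English description precedes it below -/
import Mathlib

section
/- Fix s ≥ 0. There exists a constant κ₁ > 0 such that for every nonempty open bounded set E ⊆ ℝ^d there exists a Borel probability measure η on ℝ^d which is absolutely continuous with respect to Lebesgue measure with essentially bounded density, whose support is a finite union of pairwise disjoint d-dimensional closed cubes contained in E, and which satisfies φ^s(E) ≤ κ₁ · inf_{x∈E} inf_{r>0} r^s / η(E ∩ B_r(x)). -/
open MeasureTheory Metric Set Filter ENNReal

/-- `limsup` of a sequence of sets: `⋂ n, ⋃ i ≥ n, A i`. -/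
def slimsup {X : Type*} (A : ℕ → Set X) : Set X :=
  ⋂ n, ⋃ i, ⋃ (_ : n ≤ i), A i

/-- The unit cube `[0,1]^d` in `ℝ^d`. -/
def unitCube (d : ℕ) : Set (EuclideanSpace ℝ (Fin d)) :=
  {x | ∀ i, x i ∈ Set.Icc (0 : ℝ) 1}

/-- The generalized singular value function
`φ^s(E) = sup_μ inf_{x ∈ E} inf_{r > 0} r^s / μ(B_r(x))`,
the supremum over Borel probability measures carried by `E`. -/
noncomputable def phi {d : ℕ} (s : ℝ) (E : Set (EuclideanSpace ℝ (Fin d))) : ℝ≥0∞ :=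
  ⨆ (μ : Measure (EuclideanSpace ℝ (Fin d))) (_ : IsProbabilityMeasure μ) (_ : μ Eᶜ = 0),
    ⨅ (x : EuclideanSpace ℝ (Fin d)) (_ : x ∈ E) (r : ℝ) (_ : 0 < r),
      ENNReal.ofReal (r ^ s) / μ (closedBall x r)

/-- Axis-parallel closed cube with center `z` and half-side `h`. -/
def cube {d : ℕ} (z : EuclideanSpace ℝ (Fin d)) (h : ℝ) : Set (EuclideanSpace ℝ (Fin d)) :=
  {x | ∀ i, |x i - z i| ≤ h}

/-- Topological support of a measure: points all of whose open neighbourhoods have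
positive measure. -/
def msupport {X : Type*} [TopologicalSpace X] [MeasurableSpace X]
    (μ : Measure X) : Set X :=
  {x | ∀ U : Set X, IsOpen U → x ∈ U → 0 < μ U}

/-!
Take a probability measure `μ` on `E` with `φ^s(E) μ(B(x, r)) ≤ 2 r^s` for all `x ∈ E`, `r > 0`
(almost optimal in the definition of `φ^s`). On a grid of mesh `ℓ` fine enough, the cells contained
in `E` carry more than half of `μ`; keep finitely many such cells and let `η` spread the
renormalised `μ`-mass of each one uniformly over the concentric closed cube of a quarter of its
side. A ball `B(x, r)` only charges cells it meets, which lie in `B(x, r + √d ℓ)`, so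
`η(B(x, r)) ≤ 2 μ(B(x, r + √d ℓ)) min(1, 4r/ℓ)^d`, and for `s ≤ d` this gives
`φ^s(E) η(B(x, r)) ≲ r^s`. For `s > d` a measure with `μ(B(x, r)) ≲ r^s` has zero Lebesgue density
everywhere on `E`, so `φ^s(E) = 0` and there is nothing to prove.
-/

open Function Topology
open scoped NNReal

namespace EuclideanSpace

variable {d : ℕ}

theorem abs_apply_sub_le_dist (x y : EuclideanSpace ℝ (Fin d)) (i : Fin d) :
    |x i - y i| ≤ dist x y := by
  simpa only [Real.dist_eq] using PiLp.dist_apply_le x y i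

theorem dist_le_sqrt_mul_of_abs_apply_sub_le {x y : EuclideanSpace ℝ (Fin d)} {c : ℝ}
    (hc : 0 ≤ c) (h : ∀ i, |x i - y i| ≤ c) : dist x y ≤ √d * c := by
  have hsum : ∑ i, dist (x i) (y i) ^ 2 ≤ d * c ^ 2 := by
    calc ∑ i, dist (x i) (y i) ^ 2 ≤ ∑ _i : Fin d, c ^ 2 := by
          gcongr with i
          rw [Real.dist_eq]
          exact h i
      _ = d * c ^ 2 := by simp
  rw [EuclideanSpace.dist_eq, ← Real.sqrt_sq hc, ← Real.sqrt_mul (Nat.cast_nonneg d)]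
  exact Real.sqrt_le_sqrt hsum

end EuclideanSpace

open EuclideanSpace

section Cube

variable {d : ℕ}

theorem cube_eq_preimage (z : EuclideanSpace ℝ (Fin d)) (h : ℝ) :
    cube z h = WithLp.ofLp ⁻¹' Set.univ.pi fun i => Icc (z i - h) (z i + h) := by
  ext x
  simp only [cube, mem_ofPred_eq, mem_preimage, mem_univ_pi, mem_Icc, abs_sub_le_iff]
  exact forall_congr' fun i => by constructor <;> rintro ⟨h₁, h₂⟩ <;> constructor <;> linarith

theorem isClosed_cube (z : EuclideanSpace ℝ (Fin d)) (h : ℝ) : IsClosed (cube z h) := by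
  rw [cube_eq_preimage]
  exact (isClosed_set_pi fun _ _ => isClosed_Icc).preimage (PiLp.continuous_ofLp 2 _)

theorem volume_cube (z : EuclideanSpace ℝ (Fin d)) (h : ℝ) :
    volume (cube z h) = ENNReal.ofReal (2 * h) ^ d := by
  rw [cube_eq_preimage, (PiLp.volume_preserving_ofLp (Fin d)).measure_preimage
    (MeasurableSet.univ_pi fun _ => measurableSet_Icc).nullMeasurableSet, volume_pi_pi]
  simp [Real.volume_Icc, two_mul]

theorem volume_cube_ne_zero (z : EuclideanSpace ℝ (Fin d)) {h : ℝ} (hh : 0 < h) :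
    volume (cube z h) ≠ 0 := by
  rw [volume_cube]
  exact pow_ne_zero _ (ENNReal.ofReal_pos.2 (by positivity)).ne'

theorem volume_cube_ne_top (z : EuclideanSpace ℝ (Fin d)) (h : ℝ) : volume (cube z h) ≠ ⊤ := by
  rw [volume_cube]
  exact ENNReal.pow_ne_top ENNReal.ofReal_ne_top

theorem closedBall_subset_cube (x : EuclideanSpace ℝ (Fin d)) (r : ℝ) :
    closedBall x r ⊆ cube x r :=
  fun y hy i => (abs_apply_sub_le_dist y x i).trans (mem_closedBall.1 hy)

theorem convex_cube (z : EuclideanSpace ℝ (Fin d)) (h : ℝ) : Convex ℝ (cube z h) := by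
  rw [cube_eq_preimage]
  exact (convex_pi fun _ _ => convex_Icc _ _).linear_preimage (WithLp.linearEquiv 2 ℝ _).toLinearMap

theorem closure_interior_cube (z : EuclideanSpace ℝ (Fin d)) {h : ℝ} (hh : 0 < h) :
    closure (interior (cube z h)) = cube z h := by
  have hz : z ∈ interior (cube z h) := isOpen_ball.subset_interior_iff.2
    (ball_subset_closedBall.trans (closedBall_subset_cube z h)) (mem_ball_self hh)
  rw [(convex_cube z h).closure_interior_eq_closure_of_nonempty_interior ⟨z, hz⟩,
    (isClosed_cube z h).closure_eq]

theorem volume_closedBall_inter_cube_le (x z : EuclideanSpace ℝ (Fin d)) {r h : ℝ} (hr : 0 ≤ r)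
    (hh : 0 < h) :
    volume (closedBall x r ∩ cube z h) ≤
      ENNReal.ofReal (min 1 (r / h) ^ d) * volume (cube z h) := by
  rcases le_total r h with hrh | hhr
  · calc volume (closedBall x r ∩ cube z h) ≤ volume (cube x r) :=
          measure_mono (inter_subset_left.trans (closedBall_subset_cube x r))
      _ = ENNReal.ofReal (min 1 (r / h) ^ d) * volume (cube z h) := by
          rw [min_eq_right ((div_le_one hh).2 hrh), volume_cube x r, volume_cube z h,
            ← ENNReal.ofReal_pow (by positivity), ← ENNReal.ofReal_pow (by positivity),
            ← ENNReal.ofReal_mul (by positivity), ← mul_pow]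
          congr 2
          field_simp
  · calc volume (closedBall x r ∩ cube z h) ≤ volume (cube z h) := measure_mono inter_subset_right
      _ = ENNReal.ofReal (min 1 (r / h) ^ d) * volume (cube z h) := by
          rw [min_eq_left ((one_le_div hh).2 hhr)]
          simp

end Cube

section Grid

variable {d : ℕ}

noncomputable def gridIndex (ℓ : ℝ) (x : EuclideanSpace ℝ (Fin d)) : Fin d → ℤ :=
  fun i => ⌊x i / ℓ⌋

/-- The half-open cell `∏ i, [k i * ℓ, (k i + 1) * ℓ)` of the grid `ℓ ℤ^d`. -/
def gridCube (ℓ : ℝ) (k : Fin d → ℤ) : Set (EuclideanSpace ℝ (Fin d)) :=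
  {x | gridIndex ℓ x = k}

noncomputable def gridCenter (ℓ : ℝ) (k : Fin d → ℤ) : EuclideanSpace ℝ (Fin d) :=
  WithLp.toLp 2 fun i => (k i + 1 / 2) * ℓ

theorem mem_gridCube_gridIndex (ℓ : ℝ) (x : EuclideanSpace ℝ (Fin d)) :
    x ∈ gridCube ℓ (gridIndex ℓ x) :=
  rfl

theorem measurableSet_gridCube (ℓ : ℝ) (k : Fin d → ℤ) : MeasurableSet (gridCube ℓ k) :=
  measurableSet_eq_fun (measurable_pi_lambda _ fun i =>
    ((EuclideanSpace.proj i).continuous.measurable.div_const ℓ).floor) measurable_const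

theorem pairwise_disjoint_gridCube (ℓ : ℝ) :
    Pairwise (Disjoint on gridCube (d := d) ℓ) :=
  fun _ _ hkk' => Set.disjoint_left.2 fun _ hx hx' => hkk' (hx.symm.trans hx')

theorem dist_le_of_mem_gridCube {ℓ : ℝ} (hℓ : 0 < ℓ) {k : Fin d → ℤ}
    {x y : EuclideanSpace ℝ (Fin d)} (hx : x ∈ gridCube ℓ k) (hy : y ∈ gridCube ℓ k) :
    dist x y ≤ √d * ℓ := by
  refine dist_le_sqrt_mul_of_abs_apply_sub_le hℓ.le fun i => ?_
  have h := Int.abs_sub_lt_one_of_floor_eq_floor (congrFun (hx.trans hy.symm) i)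
  rw [← sub_div, abs_div, abs_of_pos hℓ, div_lt_one hℓ] at h
  exact h.le

theorem cube_gridCenter_subset_gridCube {ℓ : ℝ} (hℓ : 0 < ℓ) (k : Fin d → ℤ) :
    cube (gridCenter ℓ k) (ℓ / 4) ⊆ gridCube ℓ k := by
  intro x hx
  funext i
  have hxi := abs_le.1 (hx i)
  simp only [gridCenter] at hxi
  rw [gridIndex, Int.floor_eq_iff, le_div_iff₀ hℓ, div_lt_iff₀ hℓ]
  constructor <;> nlinarith

theorem exists_lt_measure_iUnion_gridCube_subset {E : Set (EuclideanSpace ℝ (Fin d))}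
    (hE : IsOpen E) {μ : Measure (EuclideanSpace ℝ (Fin d))} {c : ℝ≥0∞} (hc : c < μ E) :
    ∃ ℓ > 0, c < μ (⋃ k : {k : Fin d → ℤ // gridCube ℓ k ⊆ E}, gridCube ℓ k) := by
  set F : ℕ → Set (EuclideanSpace ℝ (Fin d)) := fun n => {x | closedBall x (√d / (n + 1)) ⊆ E}
  have hF : Monotone F := fun m n hmn x hx =>
    (closedBall_subset_closedBall (by gcongr)).trans hx
  have hEF : E ⊆ ⋃ n, F n := by
    intro x hx
    obtain ⟨ε, hε, hxε⟩ := nhds_basis_closedBall.mem_iff.1 (hE.mem_nhds hx)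
    have hlim : Tendsto (fun n : ℕ => √d / (n + 1)) atTop (𝓝 0) :=
      tendsto_const_div_atTop_nhds_zero_nat (√d) |>.comp (tendsto_add_atTop_nat 1) |>.congr
        fun n => by simp
    obtain ⟨n, hn⟩ := (hlim.eventually (ge_mem_nhds hε)).exists
    exact mem_iUnion.2 ⟨n, (closedBall_subset_closedBall hn).trans hxε⟩
  obtain ⟨n, hn⟩ := lt_iSup_iff.1 (hF.measure_iUnion (μ := μ) ▸ hc.trans_le (measure_mono hEF))
  refine ⟨1 / (n + 1), by positivity, hn.trans_le (measure_mono fun x hx => ?_)⟩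
  refine mem_iUnion.2 ⟨⟨gridIndex (1 / (n + 1)) x, fun y hy => hx ?_⟩, rfl⟩
  rw [mem_closedBall, ← mul_one_div]
  exact dist_le_of_mem_gridCube (by positivity) hy (mem_gridCube_gridIndex _ x)

end Grid

theorem exists_fin_lt_sum_measure {α ι : Type*} [MeasurableSpace α] [Countable ι]
    {μ : Measure α} {Q : ι → Set α} {c : ℝ≥0∞} (hc : c < μ (⋃ i, Q i)) :
    ∃ (n : ℕ) (k : Fin n → ι), Injective k ∧ (∀ j, μ (Q (k j)) ≠ 0) ∧
      c < ∑ j, μ (Q (k j)) := by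
  classical
  obtain ⟨T, hT⟩ := lt_iSup_iff.1
    (ENNReal.tsum_eq_iSup_sum (f := fun i => μ (Q i)) ▸ hc.trans_le (measure_iUnion_le Q))
  set T' := T.filter fun i => μ (Q i) ≠ 0
  refine ⟨T'.card, fun j => T'.equivFin.symm j, Subtype.val_injective.comp
    T'.equivFin.symm.injective, fun j => (Finset.mem_filter.1 (T'.equivFin.symm j).2).2, ?_⟩
  rwa [T'.equivFin.symm.sum_comp (fun i => μ (Q i)), Finset.sum_coe_sort T' fun i => μ (Q i),
    Finset.sum_filter_ne_zero]

section Mixture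

variable {X ι : Type*} [MeasurableSpace X] [Fintype ι] (ν : Measure X)

noncomputable def mixtureDensity (w : ι → ℝ≥0∞) (C : ι → Set X) (x : X) : ℝ≥0∞ :=
  ∑ i, w i / ν (C i) * (C i).indicator 1 x

variable {ν} {w : ι → ℝ≥0∞} {C : ι → Set X}

theorem withDensity_mixtureDensity_apply [SFinite ν] (hC : ∀ i, MeasurableSet (C i))
    (T : Set X) :
    ν.withDensity (mixtureDensity ν w C) T = ∑ i, w i / ν (C i) * ν (T ∩ C i) := by
  rw [withDensity_apply' _ T]
  simp only [mixtureDensity]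
  rw [lintegral_finsetSum _ fun i _ =>
    (measurable_one.indicator (hC i)).const_mul _]
  refine Finset.sum_congr rfl fun i _ => ?_
  rw [lintegral_const_mul _ (measurable_one.indicator (hC i)), lintegral_indicator_one (hC i),
    Measure.restrict_apply (hC i), inter_comm]

theorem isProbabilityMeasure_withDensity_mixtureDensity [SFinite ν]
    (hC : ∀ i, MeasurableSet (C i)) (hC₀ : ∀ i, ν (C i) ≠ 0) (hCtop : ∀ i, ν (C i) ≠ ⊤)
    (hw : ∑ i, w i = 1) : IsProbabilityMeasure (ν.withDensity (mixtureDensity ν w C)) := by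
  constructor
  simp_rw [withDensity_mixtureDensity_apply hC, univ_inter,
    ENNReal.div_mul_cancel (hC₀ _) (hCtop _), hw]

theorem mixtureDensity_le (x : X) : mixtureDensity ν w C x ≤ ∑ i, w i / ν (C i) := by
  refine Finset.sum_le_sum fun i _ => mul_le_of_le_one_right' ?_
  exact indicator_apply_le' (fun _ => le_rfl) fun _ => zero_le_one

theorem withDensity_mixtureDensity_le [SFinite ν] (hC : ∀ i, MeasurableSet (C i))
    (hC₀ : ∀ i, ν (C i) ≠ 0) (hCtop : ∀ i, ν (C i) ≠ ⊤) {T : Set X} {G : Finset ι}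
    (hG : ∀ i, (T ∩ C i).Nonempty → i ∈ G) {a : ℝ≥0∞} (ha : ∀ i, ν (T ∩ C i) ≤ a * ν (C i)) :
    ν.withDensity (mixtureDensity ν w C) T ≤ (∑ i ∈ G, w i) * a := by
  rw [withDensity_mixtureDensity_apply hC, Finset.sum_mul,
    ← Finset.sum_subset G.subset_univ fun i _ hi => ?_]
  · refine Finset.sum_le_sum fun i _ => ?_
    calc w i / ν (C i) * ν (T ∩ C i) ≤ w i / ν (C i) * (a * ν (C i)) := by gcongr; exact ha i
      _ = w i * a := by
        rw [mul_comm a, ← mul_assoc, ENNReal.div_mul_cancel (hC₀ i) (hCtop i)]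
  · rw [not_nonempty_iff_eq_empty.1 (mt (hG i) hi), measure_empty, mul_zero]

theorem msupport_withDensity_mixtureDensity [TopologicalSpace X] [OpensMeasurableSpace X]
    [SFinite ν] [ν.IsOpenPosMeasure] (hC : ∀ i, closure (interior (C i)) = C i)
    (hw : ∀ i, w i ≠ 0) (hCtop : ∀ i, ν (C i) ≠ ⊤) :
    msupport (ν.withDensity (mixtureDensity ν w C)) = ⋃ i, C i := by
  have hCclosed i : IsClosed (C i) := hC i ▸ isClosed_closure
  have hCm i := (hCclosed i).measurableSet
  ext x
  refine ⟨fun hx => ?_, fun hx U hU hxU => ?_⟩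
  · by_contra hxC
    have hU := hx _ (isClosed_iUnion_of_finite hCclosed).isOpen_compl hxC
    have hdisj i : (⋃ j, C j)ᶜ ∩ C i = ∅ :=
      disjoint_iff_inter_eq_empty.1 (disjoint_compl_left.mono_right (subset_iUnion C i))
    simp only [withDensity_mixtureDensity_apply hCm, hdisj, measure_empty, mul_zero,
      Finset.sum_const_zero, lt_self_iff_false] at hU
  · obtain ⟨i, hi⟩ := mem_iUnion.1 hx
    have hUi : (U ∩ interior (C i)).Nonempty :=
      (mem_closure_iff.1 ((hC i).symm ▸ hi) U hU hxU)
    rw [withDensity_mixtureDensity_apply hCm]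
    refine lt_of_lt_of_le ?_ (Finset.single_le_sum (fun j _ => zero_le) (Finset.mem_univ i))
    refine ENNReal.mul_pos (ENNReal.div_pos (hw i) (hCtop i)).ne' (pos_iff_ne_zero.1 ?_)
    exact ((hU.inter isOpen_interior).measure_pos ν hUi).trans_le
      (measure_mono (inter_subset_inter_right U interior_subset))

end Mixture

theorem le_iInf_rpow_div_iff {X : Type*} {E : Set X} {s : ℝ} {m : X → ℝ → ℝ≥0∞}
    (hm : ∀ x r, m x r ≠ ⊤) {a : ℝ≥0∞} :
    a ≤ ⨅ (x : X) (_ : x ∈ E) (r : ℝ) (_ : 0 < r), ENNReal.ofReal (r ^ s) / m x r ↔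
      ∀ x ∈ E, ∀ r > 0, a * m x r ≤ ENNReal.ofReal (r ^ s) := by
  simp only [le_iInf_iff]
  refine forall₂_congr fun x _ => forall₂_congr fun r hr => ENNReal.le_div_iff_mul_le
    (Or.inr (ENNReal.ofReal_pos.2 (Real.rpow_pos_of_pos hr s)).ne') (Or.inl (hm x r))

section Phi

variable {d : ℕ} {s : ℝ} {E : Set (EuclideanSpace ℝ (Fin d))}

theorem phi_ne_top (hE : Bornology.IsBounded E) (hne : E.Nonempty) : phi s E ≠ ⊤ := by
  obtain ⟨x, hx⟩ := hne
  obtain ⟨R, hR⟩ := (isBounded_iff_subset_closedBall x).1 hE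
  refine ne_top_of_le_ne_top (ENNReal.ofReal_ne_top (r := max R 1 ^ s))
    (iSup_le fun μ => iSup_le fun hμ => iSup_le fun hμE => ?_)
  have hball : μ (closedBall x (max R 1)) = 1 :=
    (prob_compl_eq_zero_iff measurableSet_closedBall).1 <| measure_mono_null
      (compl_subset_compl.2 (hR.trans (closedBall_subset_closedBall (le_max_left _ _)))) hμE
  calc ⨅ (y) (_ : y ∈ E) (r : ℝ) (_ : 0 < r), ENNReal.ofReal (r ^ s) / μ (closedBall y r)
      ≤ ENNReal.ofReal (max R 1 ^ s) / μ (closedBall x (max R 1)) :=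
        iInf₂_le_of_le x hx (iInf₂_le _ (lt_max_of_lt_right one_pos))
    _ = ENNReal.ofReal (max R 1 ^ s) := by rw [hball, div_one]

theorem exists_frostman_measure (hne : E.Nonempty) (hφ : phi s E ≠ ⊤) :
    ∃ μ : Measure (EuclideanSpace ℝ (Fin d)), IsProbabilityMeasure μ ∧ μ Eᶜ = 0 ∧
      ∀ x ∈ E, ∀ r > 0, phi s E * μ (closedBall x r) ≤ 2 * ENNReal.ofReal (r ^ s) := by
  rcases eq_or_ne (phi s E) 0 with h0 | h0
  · obtain ⟨x, hx⟩ := hne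
    exact ⟨Measure.dirac x, inferInstance, by simp [hx], fun _ _ _ _ => by simp [h0]⟩
  obtain ⟨μ, hμ, hμE, hlt⟩ : ∃ μ : Measure (EuclideanSpace ℝ (Fin d)),
      ∃ (_ : IsProbabilityMeasure μ) (_ : μ Eᶜ = 0), phi s E / 2 <
        ⨅ (x) (_ : x ∈ E) (r : ℝ) (_ : 0 < r), ENNReal.ofReal (r ^ s) / μ (closedBall x r) := by
    simpa only [phi, lt_iSup_iff] using ENNReal.half_lt_self h0 hφ
  refine ⟨μ, hμ, hμE, fun x hx r hr => ?_⟩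
  calc phi s E * μ (closedBall x r) = 2 * (phi s E / 2 * μ (closedBall x r)) := by
        rw [← mul_assoc, ENNReal.mul_div_cancel two_ne_zero ENNReal.ofNat_ne_top]
    _ ≤ 2 * ENNReal.ofReal (r ^ s) := by
        gcongr
        exact (le_iInf_rpow_div_iff fun _ _ => measure_ne_top μ _).1 hlt.le x hx r hr

/-- Here `μ(B(x, r)) / vol(B(x, r)) → 0` at every point of `E`; conclude by Besicovitch's
covering theorem. -/
theorem measure_le_smul_volume_of_mul_measure_closedBall_le (hds : (d : ℝ) < s)
    (μ : Measure (EuclideanSpace ℝ (Fin d))) [SFinite μ] {a : ℝ≥0∞} (ha₀ : a ≠ 0)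
    (ha : a ≠ ⊤) (hμ : ∀ x ∈ E, ∀ r > 0, a * μ (closedBall x r) ≤ ENNReal.ofReal (r ^ s))
    {ε : ℝ≥0} (hε : 0 < ε) : μ E ≤ (ε • volume) E := by
  set V := volume (ball (0 : EuclideanSpace ℝ (Fin d)) 1)
  have hsmall : ∀ᶠ r in 𝓝[>] (0 : ℝ), ENNReal.ofReal (r ^ (s - d)) < ε * V * a := by
    have hlim : Tendsto (fun r : ℝ => ENNReal.ofReal (r ^ (s - d))) (𝓝 0) (𝓝 0) := by
      simpa [Real.zero_rpow (sub_pos.2 hds).ne'] using ENNReal.tendsto_ofReal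
        ((Real.continuousAt_rpow_const 0 (s - d) (Or.inr (sub_pos.2 hds).le)).tendsto)
    exact (hlim.mono_left nhdsWithin_le_nhds).eventually_lt_const
      (ENNReal.mul_pos (ENNReal.mul_pos (ENNReal.coe_ne_zero.2 hε.ne')
        (measure_ball_pos _ _ one_pos).ne').ne' ha₀)
  refine VitaliFamily.measure_le_of_frequently_le (Besicovitch.vitaliFamily μ) _
    Measure.AbsolutelyContinuous.rfl E fun x hx => (Besicovitch.tendsto_filterAt μ x).frequently
      ((hsmall.and self_mem_nhdsWithin).frequently.mono ?_)
  rintro r ⟨hr, hr0 : 0 < r⟩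
  rw [← ENNReal.mul_le_mul_iff_right ha₀ ha]
  calc a * μ (closedBall x r) ≤ ENNReal.ofReal (r ^ s) := hμ x hx r hr0
    _ = ENNReal.ofReal (r ^ d) * ENNReal.ofReal (r ^ (s - d)) := by
        rw [← ENNReal.ofReal_mul (by positivity), ← Real.rpow_natCast, ← Real.rpow_add hr0,
          add_sub_cancel]
    _ ≤ ENNReal.ofReal (r ^ d) * (ε * V * a) := by gcongr
    _ = a * (ε • volume) (closedBall x r) := by
        rw [Measure.smul_apply, Measure.addHaar_closedBall _ _ hr0.le, finrank_euclideanSpace_fin,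
          ENNReal.smul_def, smul_eq_mul]
        ring

theorem phi_eq_zero_of_lt (hds : (d : ℝ) < s) (hE : Bornology.IsBounded E) : phi s E = 0 := by
  refine le_antisymm (iSup_le fun μ => iSup_le fun hμ => iSup_le fun hμE => ?_) zero_le
  set c := ⨅ (x) (_ : x ∈ E) (r : ℝ) (_ : 0 < r), ENNReal.ofReal (r ^ s) / μ (closedBall x r)
  by_contra hc
  have hc₀ : min c 1 ≠ 0 := (lt_min (not_le.1 hc) zero_lt_one).ne'
  have hμc := (le_iInf_rpow_div_iff fun _ _ => measure_ne_top μ _).1 (min_le_left c 1)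
  have hμE₁ : 1 ≤ μ E := by simpa [hμE] using measure_univ_le_add_compl (μ := μ) E
  obtain ⟨ε, hε, hεE⟩ :=
    ENNReal.exists_nnreal_pos_mul_lt (hE.measure_lt_top (μ := volume)).ne one_ne_zero
  exact (hμE₁.trans (measure_le_smul_volume_of_mul_measure_closedBall_le hds μ hc₀
    (min_le_right c 1 |>.trans_lt ENNReal.one_lt_top).ne hμc hε)).not_gt hεE

theorem phi_le_ofReal_mul_iInf {κ : ℝ} (hκ : 0 < κ) {η : Measure (EuclideanSpace ℝ (Fin d))}
    [IsFiniteMeasure η] (h : ∀ x ∈ E, ∀ r > 0,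
      phi s E * η (E ∩ closedBall x r) ≤ ENNReal.ofReal κ * ENNReal.ofReal (r ^ s)) :
    phi s E ≤ ENNReal.ofReal κ *
      ⨅ (x) (_ : x ∈ E) (r : ℝ) (_ : 0 < r), ENNReal.ofReal (r ^ s) / η (E ∩ closedBall x r) := by
  have hκ₀ : ENNReal.ofReal κ ≠ 0 := by simpa using hκ
  rw [mul_comm, ← ENNReal.div_le_iff hκ₀ ENNReal.ofReal_ne_top,
    le_iInf_rpow_div_iff fun _ _ => measure_ne_top η _]
  intro x hx r hr
  rw [← ENNReal.mul_div_right_comm]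
  exact ENNReal.div_le_of_le_mul' (h x hx r hr)

end Phi

section Construction

variable {d : ℕ}

def IsCubeMeasure (E : Set (EuclideanSpace ℝ (Fin d))) (η : Measure (EuclideanSpace ℝ (Fin d))) :
    Prop :=
  IsProbabilityMeasure η ∧
    (∃ f : EuclideanSpace ℝ (Fin d) → ℝ≥0∞,
      (∃ C : ℝ≥0∞, C ≠ ⊤ ∧ ∀ x, f x ≤ C) ∧ η = volume.withDensity f) ∧
    (∃ (k : ℕ) (z : Fin k → EuclideanSpace ℝ (Fin d)) (h : Fin k → ℝ),
      (∀ j, 0 < h j) ∧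
      (∀ j, cube (z j) (h j) ⊆ E) ∧
      (∀ j j', j ≠ j' → Disjoint (cube (z j) (h j)) (cube (z j') (h j'))) ∧
      msupport η = ⋃ j, cube (z j) (h j))

theorem withDensity_mixtureDensity_closedBall_le {ℓ : ℝ} (hℓ : 0 < ℓ) {ι : Type*} [Fintype ι]
    {k : ι → Fin d → ℤ} (hk : Injective k) {μ : Measure (EuclideanSpace ℝ (Fin d))}
    {w : ι → ℝ≥0∞} {c : ℝ≥0∞} (hw : ∀ j, w j ≤ c * μ (gridCube ℓ (k j)))
    (x : EuclideanSpace ℝ (Fin d)) {r : ℝ} (hr : 0 ≤ r) :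
    volume.withDensity (mixtureDensity volume w fun j => cube (gridCenter ℓ (k j)) (ℓ / 4))
        (closedBall x r) ≤
      c * μ (closedBall x (r + √d * ℓ)) * ENNReal.ofReal (min 1 (4 * r / ℓ) ^ d) := by
  classical
  have hℓ4 : 0 < ℓ / 4 := by positivity
  set G := Finset.univ.filter fun j => (closedBall x r ∩ cube (gridCenter ℓ (k j)) (ℓ / 4)).Nonempty
  have hG : ⋃ j ∈ G, gridCube ℓ (k j) ⊆ closedBall x (r + √d * ℓ) := by
    intro y hy
    obtain ⟨j, hj, hyj⟩ := mem_iUnion₂.1 hy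
    obtain ⟨p, hpx, hpj⟩ := (Finset.mem_filter.1 hj).2
    calc dist y x ≤ dist y p + dist p x := dist_triangle y p x
      _ ≤ √d * ℓ + r := add_le_add
          (dist_le_of_mem_gridCube hℓ hyj (cube_gridCenter_subset_gridCube hℓ _ hpj)) hpx
      _ = r + √d * ℓ := add_comm _ _
  have hdisj : (G : Set ι).PairwiseDisjoint fun j => gridCube ℓ (k j) :=
    ((pairwise_disjoint_gridCube ℓ).comp_of_injective hk).set_pairwise _
  calc _ ≤ (∑ j ∈ G, w j) * ENNReal.ofReal (min 1 (4 * r / ℓ) ^ d) := by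
        refine withDensity_mixtureDensity_le (fun j => (isClosed_cube _ _).measurableSet)
          (fun j => volume_cube_ne_zero _ hℓ4) (fun j => volume_cube_ne_top _ _)
          (fun j hj => Finset.mem_filter.2 ⟨Finset.mem_univ j, hj⟩) fun j => ?_
        convert volume_closedBall_inter_cube_le x _ hr hℓ4 using 5
        field_simp
    _ ≤ c * μ (closedBall x (r + √d * ℓ)) * ENNReal.ofReal (min 1 (4 * r / ℓ) ^ d) := by
        gcongr
        calc ∑ j ∈ G, w j ≤ ∑ j ∈ G, c * μ (gridCube ℓ (k j)) := Finset.sum_le_sum fun j _ => hw j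
          _ = c * μ (⋃ j ∈ G, gridCube ℓ (k j)) := by
            rw [← Finset.mul_sum,
              measure_biUnion_finset hdisj fun j _ => measurableSet_gridCube _ _]
          _ ≤ c * μ (closedBall x (r + √d * ℓ)) := by gcongr

theorem exists_gridCubes_lt_sum_measure {E : Set (EuclideanSpace ℝ (Fin d))} (hE : IsOpen E)
    {μ : Measure (EuclideanSpace ℝ (Fin d))} {c : ℝ≥0∞} (hc : c < μ E) :
    ∃ ℓ > 0, ∃ (n : ℕ) (k : Fin n → Fin d → ℤ), Injective k ∧ (∀ j, gridCube ℓ (k j) ⊆ E) ∧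
      (∀ j, μ (gridCube ℓ (k j)) ≠ 0) ∧ c < ∑ j, μ (gridCube ℓ (k j)) := by
  obtain ⟨ℓ, hℓ, hcover⟩ := exists_lt_measure_iUnion_gridCube_subset hE hc
  obtain ⟨n, k, hk, hk₀, hsum⟩ := exists_fin_lt_sum_measure hcover
  exact ⟨ℓ, hℓ, n, fun j => k j, Subtype.val_injective.comp hk, fun j => (k j).2, hk₀, hsum⟩

theorem isCubeMeasure_withDensity_mixtureDensity {E : Set (EuclideanSpace ℝ (Fin d))} {ℓ : ℝ}
    (hℓ : 0 < ℓ) {n : ℕ} {k : Fin n → Fin d → ℤ} (hk : Injective k)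
    (hkE : ∀ j, gridCube ℓ (k j) ⊆ E) {w : Fin n → ℝ≥0∞} (hw₀ : ∀ j, w j ≠ 0)
    (hwtop : ∀ j, w j ≠ ⊤) (hw : ∑ j, w j = 1) :
    IsCubeMeasure E
      (volume.withDensity (mixtureDensity volume w fun j => cube (gridCenter ℓ (k j)) (ℓ / 4))) := by
  have hℓ4 : 0 < ℓ / 4 := by positivity
  have hsub j : cube (gridCenter ℓ (k j)) (ℓ / 4) ⊆ gridCube ℓ (k j) :=
    cube_gridCenter_subset_gridCube hℓ (k j)
  refine ⟨isProbabilityMeasure_withDensity_mixtureDensity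
      (fun j => (isClosed_cube _ _).measurableSet) (fun j => volume_cube_ne_zero _ hℓ4)
      (fun j => volume_cube_ne_top _ _) hw,
    ⟨_, ⟨_, ENNReal.sum_ne_top.2 fun j _ => ENNReal.div_ne_top (hwtop j)
      (volume_cube_ne_zero _ hℓ4), mixtureDensity_le⟩, rfl⟩,
    n, fun j => gridCenter ℓ (k j), fun _ => ℓ / 4, fun _ => hℓ4,
    fun j => (hsub j).trans (hkE j),
    fun j j' hjj' => (pairwise_disjoint_gridCube ℓ (hk.ne hjj')).mono (hsub j) (hsub j'), ?_⟩
  exact msupport_withDensity_mixtureDensity (fun j => closure_interior_cube _ hℓ4) hw₀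
    fun j => volume_cube_ne_top _ _

/-- The measure `η` spreads the mass `μ(Q)` of each grid cell `Q` of a finite family carrying more
than half of `μ`, renormalised, uniformly over the closed cube with the same centre and a quarter
of its side length. -/
theorem exists_isCubeMeasure_closedBall_le {E : Set (EuclideanSpace ℝ (Fin d))} (hE : IsOpen E)
    (μ : Measure (EuclideanSpace ℝ (Fin d))) [IsProbabilityMeasure μ] (hμE : μ Eᶜ = 0) :
    ∃ ℓ > 0, ∃ η, IsCubeMeasure E η ∧ ∀ x, ∀ r ≥ 0,
      η (closedBall x r) ≤
        2 * μ (closedBall x (r + √d * ℓ)) * ENNReal.ofReal (min 1 (4 * r / ℓ) ^ d) := by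
  have hμE₁ : 1 / 2 < μ E := by
    rw [(prob_compl_eq_zero_iff hE.measurableSet).1 hμE, one_div]
    exact ENNReal.inv_lt_one.2 one_lt_two
  obtain ⟨ℓ, hℓ, n, k, hk, hkE, hk₀, hsum⟩ := exists_gridCubes_lt_sum_measure hE hμE₁
  set M := ∑ j, μ (gridCube ℓ (k j))
  have hM₀ : M ≠ 0 := (zero_le.trans_lt hsum).ne'
  have hMtop : M ≠ ⊤ := ENNReal.sum_ne_top.2 fun j _ => measure_ne_top μ _
  have hw j : μ (gridCube ℓ (k j)) / M ≤ 2 * μ (gridCube ℓ (k j)) := by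
    rw [ENNReal.div_eq_inv_mul]
    gcongr
    rw [ENNReal.inv_le_iff_inv_le, ← one_div]
    exact hsum.le
  refine ⟨ℓ, hℓ, _, isCubeMeasure_withDensity_mixtureDensity hℓ hk hkE
    (fun j => ENNReal.div_ne_zero.2 ⟨hk₀ j, hMtop⟩)
    (fun j => ENNReal.div_ne_top (measure_ne_top μ _) hM₀) ?_,
    fun x r hr => withDensity_mixtureDensity_closedBall_le hℓ hk hw x hr⟩
  simp only [ENNReal.div_eq_inv_mul, ← Finset.mul_sum]
  exact ENNReal.inv_mul_cancel hM₀ hMtop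

end Construction

theorem rpow_mul_min_pow_le {s a r ℓ : ℝ} {n : ℕ} (hs : 0 ≤ s) (hsn : s ≤ n) (ha : 0 ≤ a)
    (hr : 0 < r) (hℓ : 0 < ℓ) :
    (r + a * ℓ) ^ s * min 1 (4 * r / ℓ) ^ n ≤ ((1 + 4 * a) * r) ^ s := by
  set t := min 1 (4 * r / ℓ)
  have ht₀ : 0 < t := lt_min one_pos (by positivity)
  have hts : t ^ n ≤ t ^ s := by
    rw [← Real.rpow_natCast]
    exact Real.rpow_le_rpow_of_exponent_ge ht₀ (min_le_left _ _) hsn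
  have hkey : (r + a * ℓ) * t ≤ (1 + 4 * a) * r := by
    rcases le_total 1 (4 * r / ℓ) with h | h
    · rw [show t = 1 from min_eq_left h]
      rw [one_le_div hℓ] at h
      nlinarith
    · rw [show t = 4 * r / ℓ from min_eq_right h, mul_div_assoc', div_le_iff₀ hℓ]
      rw [div_le_one hℓ] at h
      nlinarith
  calc (r + a * ℓ) ^ s * t ^ n ≤ (r + a * ℓ) ^ s * t ^ s := by gcongr
    _ = ((r + a * ℓ) * t) ^ s := (Real.mul_rpow (by positivity) ht₀.le).symm
    _ ≤ ((1 + 4 * a) * r) ^ s := Real.rpow_le_rpow (by positivity) hkey hs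

/-- For small radii the factor `min 1 (4 r / ℓ) ^ d ≤ min 1 (4 r / ℓ) ^ s` compensates the
enlargement of the radius to `r + √d ℓ`. -/
theorem mul_measure_closedBall_le_of_le {d : ℕ} {s : ℝ} (hs : 0 ≤ s) (hsd : s ≤ d)
    {E : Set (EuclideanSpace ℝ (Fin d))} {μ η : Measure (EuclideanSpace ℝ (Fin d))} {a : ℝ≥0∞}
    (hμ : ∀ x ∈ E, ∀ r > 0, a * μ (closedBall x r) ≤ 2 * ENNReal.ofReal (r ^ s)) {ℓ : ℝ}
    (hℓ : 0 < ℓ) (hη : ∀ x, ∀ r ≥ 0, η (closedBall x r) ≤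
      2 * μ (closedBall x (r + √d * ℓ)) * ENNReal.ofReal (min 1 (4 * r / ℓ) ^ d))
    {x : EuclideanSpace ℝ (Fin d)} (hx : x ∈ E) {r : ℝ} (hr : 0 < r) :
    a * η (closedBall x r) ≤ ENNReal.ofReal (4 * (1 + 4 * √d) ^ s) * ENNReal.ofReal (r ^ s) := by
  set t := min 1 (4 * r / ℓ)
  calc a * η (closedBall x r)
      ≤ a * (2 * μ (closedBall x (r + √d * ℓ)) * ENNReal.ofReal (t ^ d)) := by
        gcongr
        exact hη x r hr.le
    _ = 2 * (a * μ (closedBall x (r + √d * ℓ))) * ENNReal.ofReal (t ^ d) := by ring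
    _ ≤ 2 * (2 * ENNReal.ofReal ((r + √d * ℓ) ^ s)) * ENNReal.ofReal (t ^ d) := by
        gcongr 2 * ?_ * _
        exact hμ x hx _ (add_pos_of_pos_of_nonneg hr (by positivity))
    _ = ENNReal.ofReal (4 * ((r + √d * ℓ) ^ s * t ^ d)) := by
        rw [ENNReal.ofReal_mul (by norm_num), ENNReal.ofReal_mul (by positivity)]
        norm_num
        ring
    _ ≤ ENNReal.ofReal (4 * (1 + 4 * √d) ^ s) * ENNReal.ofReal (r ^ s) := by
        rw [← ENNReal.ofReal_mul (by positivity), mul_assoc, ← Real.mul_rpow (by positivity) hr.le]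
        gcongr
        exact rpow_mul_min_pow_le hs hsd (Real.sqrt_nonneg d) hr hℓ

/-- Lemma 2.3: there is `κ₁ > 0` such that for any nonempty open bounded `E ⊆ ℝ^d` there
is an absolutely continuous probability measure `η` of bounded density, supported on a
finite union of disjoint closed cubes contained in `E`, with
`φ^s(E) ≤ κ₁ · inf_{x∈E} inf_{r>0} r^s / η(E ∩ B_r(x))`. -/
theorem phi_approx_by_ac_measure (d : ℕ) (s : ℝ) (hs : 0 ≤ s) :
    ∃ κ₁ : ℝ, 0 < κ₁ ∧
      ∀ E : Set (EuclideanSpace ℝ (Fin d)), IsOpen E → E.Nonempty →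
        Bornology.IsBounded E →
        ∃ η : Measure (EuclideanSpace ℝ (Fin d)), IsProbabilityMeasure η ∧
          (∃ f : EuclideanSpace ℝ (Fin d) → ℝ≥0∞,
            (∃ C : ℝ≥0∞, C ≠ ⊤ ∧ ∀ x, f x ≤ C) ∧ η = volume.withDensity f) ∧
          (∃ (k : ℕ) (z : Fin k → EuclideanSpace ℝ (Fin d)) (h : Fin k → ℝ),
            (∀ j, 0 < h j) ∧
            (∀ j, cube (z j) (h j) ⊆ E) ∧
            (∀ j j', j ≠ j' → Disjoint (cube (z j) (h j)) (cube (z j') (h j'))) ∧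
            msupport η = ⋃ j, cube (z j) (h j)) ∧
          phi s E ≤ ENNReal.ofReal κ₁ *
            ⨅ (x : EuclideanSpace ℝ (Fin d)) (_ : x ∈ E) (r : ℝ) (_ : 0 < r),
              ENNReal.ofReal (r ^ s) / η (E ∩ closedBall x r) := by
  have hκ : 0 < 4 * (1 + 4 * √d) ^ s := mul_pos four_pos (Real.rpow_pos_of_pos (by positivity) s)
  refine ⟨_, hκ, fun E hE hne hbdd => ?_⟩
  obtain ⟨μ, hμ, hμE, hfrost⟩ := exists_frostman_measure hne (phi_ne_top (s := s) hbdd hne)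
  obtain ⟨ℓ, hℓ, η, ⟨hη, hηdens, hηcubes⟩, hημ⟩ := exists_isCubeMeasure_closedBall_le hE μ hμE
  refine ⟨η, hη, hηdens, hηcubes, phi_le_ofReal_mul_iInf hκ fun x hx r hr => ?_⟩
  rcases eq_or_ne (phi s E) 0 with h0 | h0
  · simp [h0]
  have hsd : s ≤ d := le_of_not_gt fun h => h0 (phi_eq_zero_of_lt h hbdd)
  exact (mul_le_mul_right (measure_mono inter_subset_right) _).trans
    (mul_measure_closedBall_le_of_le hs hsd hfrost hℓ hημ hx hr)
end

section
/- Let s ≥ 0 and let E ⊆ ℝ^d be a bounded Borel set with φ^s(E) > 0. Let ε, η ∈ (0,1), and let μ be a Borel probability measure supported on E satisfying inf_{x∈E} inf_{r>0} r^s/μ(B_r(x)) > φ^s(E)(1−η). Let A be the set of points x ∈ E such that for all y ∈ E and r > 0, if x ∈ B_r(y) then μ(B_r(y)) < (1−ε) r^s/φ^s(E). Suppose c > 0 is a constant with the property that for every bounded Borel set K ⊆ ℝ^d with positive s-dimensional Hausdorff measure there exists a Borel probability measure m supported на K such that m(B_r(x)) ≤ r^s/(c · H^s_∞(K)) for all x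 ∈ ℝ^d and r > 0. Then H^s_∞(A) ≤ φ^s(E) / (c·(1 − ε + ε/η)). -/
open MeasureTheory Metric Set Filter ENNReal

/-- The `s`-dimensional Hausdorff content: infimum of `∑ (diam D_i)^s` over countable
covers of `A` by closed balls `D_i`. -/
noncomputable def hContent {X : Type*} [PseudoMetricSpace X] (s : ℝ) (A : Set X) : ℝ≥0∞ :=
  ⨅ (c : ℕ → X) (r : ℕ → ℝ) (_ : A ⊆ ⋃ n, closedBall (c n) (r n)),
    ∑' n, EMetric.diam (closedBall (c n) (r n)) ^ s

/-!
Suppose `A` had larger content. Let `V` be the open union of the balls `ball y r`, `y ∈ E`, whose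
closed ball is heavy: `μ(B_r(y)) ≥ (1-ε) r^s / φ^s(E)`. Points of `A` avoid `V`, so `K = E \ V`
has content exceeding `φ^s(E) / (c(1 - ε + ε/η))`, and the Frostman hypothesis yields `m` on `K`
with `m(B_r(x)) < (1 - ε + ε/η) r^s / φ^s(E)`. The mixture `ν = η m + (1-η) μ` then satisfies
`ν(B_r(x)) ≤ κ r^s / φ^s(E)` with `κ < 1` for all balls centred in `E`. On a light ball the bounds
for `m` and `μ` add up to less than `η(1 - ε + ε/η) + (1-η)(1-ε) = 1`; a heavy ball lies in `V`,
where `m` vanishes, and there `(1-η) μ` is small by the near-optimality of `μ`. Then `ν` witnesses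
`φ^s(E) ≥ φ^s(E) / κ > φ^s(E)`.
-/

open Topology

namespace ENNReal

lemma le_div_iff_le_mul_inv {a b c : ℝ≥0∞} (ha₀ : a ≠ 0) (ha : a ≠ ∞) :
    c ≤ a / b ↔ b ≤ a * c⁻¹ := by
  rw [ENNReal.le_div_iff_mul_le (Or.inr ha₀) (Or.inr ha), ← div_eq_mul_inv,
    ENNReal.le_div_iff_mul_le (Or.inr ha₀) (Or.inr ha), mul_comm]

lemma mul_inv_lt_inv_of_mul_lt {a b c : ℝ≥0∞} (ha₀ : a ≠ 0) (ha : a ≠ ∞) (h : b * a < c) :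
    a * c⁻¹ < b⁻¹ := by
  rw [← ENNReal.lt_div_iff_mul_lt (Or.inl ha₀) (Or.inl ha), ← ENNReal.inv_lt_inv,
    ENNReal.inv_div (Or.inl ha) (Or.inl ha₀)] at h
  rwa [div_eq_mul_inv] at h

end ENNReal

lemma le_of_forall_gt_of_continuousWithinAt {α β : Type*} [TopologicalSpace α] [LinearOrder α]
    [TopologicalSpace β] [Preorder β] [ClosedIciTopology β] {f : α → β} {a : β} {r : α}
    [(𝓝[>] r).NeBot] (hf : ContinuousWithinAt f (Ioi r) r) (h : ∀ r' > r, a ≤ f r') :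
    a ≤ f r :=
  ge_of_tendsto hf (eventually_nhdsWithin_of_forall h)

lemma isProbabilityMeasure_ofReal_smul_add {X : Type*} [MeasurableSpace X] {m μ : Measure X}
    [IsProbabilityMeasure m] [IsProbabilityMeasure μ] {η : ℝ} (h₀ : 0 ≤ η) (h₁ : η ≤ 1) :
    IsProbabilityMeasure (ENNReal.ofReal η • m + ENNReal.ofReal (1 - η) • μ) where
  measure_univ := by simp [← ENNReal.ofReal_add h₀ (sub_nonneg.mpr h₁)]

section Content

variable {X : Type*} [PseudoMetricSpace X] {s : ℝ}

lemma hContent_mono (s : ℝ) {A B : Set X} (h : A ⊆ B) : hContent s A ≤ hContent s B :=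
  le_iInf₂ fun c r => le_iInf fun hcov => (iInf₂_le c r).trans (iInf_le _ (h.trans hcov))

lemma hContent_zero_eq_top (A : Set X) : hContent 0 A = ∞ := by
  simp only [hContent, ENNReal.rpow_zero, ENNReal.tsum_const_eq_top_of_ne_zero one_ne_zero,
    iInf_top]

lemma exists_closedBall_superset_ediam_rpow_le [Nonempty X] (hs : 0 < s) {t : Set X}
    (ht : Metric.ediam t ≠ ∞) :
    ∃ x r, t ⊆ closedBall x r ∧
      Metric.ediam (closedBall x r) ^ s ≤ 2 ^ s * ⨆ _ : t.Nonempty, Metric.ediam t ^ s := by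
  rcases t.eq_empty_or_nonempty with rfl | ⟨y, hy⟩
  · refine ⟨Classical.arbitrary X, -1, empty_subset _, ?_⟩
    rw [closedBall_eq_empty.mpr (by norm_num), Metric.ediam_empty, ENNReal.zero_rpow_of_pos hs]
    exact zero_le
  · refine ⟨y, (Metric.ediam t).toReal, fun z hz => ?_, ?_⟩
    · rw [mem_closedBall, dist_edist]
      exact ENNReal.toReal_mono ht (edist_le_ediam_of_mem hz hy)
    · rw [iSup_pos ⟨y, hy⟩, ← ENNReal.mul_rpow_of_nonneg _ _ hs.le,
        ← Metric.closedEBall_ofReal ENNReal.toReal_nonneg, ENNReal.ofReal_toReal ht]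
      exact ENNReal.rpow_le_rpow ediam_closedEBall_le hs.le

end Content

section Frostman

variable {X : Type*} [MetricSpace X] [MeasurableSpace X] [BorelSpace X] {s : ℝ}

lemma hContent_le_two_rpow_mul_hausdorffMeasure [Nonempty X] (hs : 0 < s) (K : Set X) :
    hContent s K ≤ 2 ^ s * μH[s] K := by
  have h2 : (2 : ℝ≥0∞) ^ s ≠ 0 := (ENNReal.rpow_pos (by norm_num) (by norm_num)).ne'
  have h2' : (2 : ℝ≥0∞) ^ s ≠ ∞ := ENNReal.rpow_ne_top_of_nonneg hs.le (by norm_num)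
  rw [Measure.hausdorffMeasure_apply]
  refine le_trans ?_ (mul_le_mul_right (le_iSup₂_of_le 1 one_pos le_rfl) _)
  simp only [ENNReal.mul_iInf_of_ne h2 h2']
  refine le_iInf₂ fun t hcov => le_iInf fun hdiam => ?_
  choose x r hsub hball using fun n =>
    exists_closedBall_superset_ediam_rpow_le hs ((hdiam n).trans_lt ENNReal.one_lt_top).ne
  calc hContent s K ≤ ∑' n, Metric.ediam (closedBall (x n) (r n)) ^ s :=
        (iInf₂_le x r).trans (iInf_le _ (hcov.trans (iUnion_mono hsub)))
    _ ≤ ∑' n, 2 ^ s * ⨆ _ : (t n).Nonempty, Metric.ediam (t n) ^ s :=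
        ENNReal.tsum_le_tsum hball
    _ = _ := ENNReal.tsum_mul_left

lemma hausdorffMeasure_pos_of_hContent_pos [Nonempty X] (hs : 0 < s) {K : Set X}
    (h : 0 < hContent s K) : 0 < μH[s] K := by
  refine pos_iff_ne_zero.mpr fun h0 => ?_
  simpa [h0] using h.trans_le (hContent_le_two_rpow_mul_hausdorffMeasure hs K)

variable (X) in
def IsFrostmanConstant (s c : ℝ) : Prop :=
  ∀ K : Set X, Bornology.IsBounded K → MeasurableSet K → 0 < μH[s] K →
    ∃ m : Measure X, IsProbabilityMeasure m ∧ m Kᶜ = 0 ∧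
      ∀ (x : X) (r : ℝ), 0 < r →
        m (closedBall x r) ≤ ENNReal.ofReal (r ^ s) / (ENNReal.ofReal c * hContent s K)

/-- At `s = 0` the content is infinite, so a Frostman measure of a point would vanish on every
ball. -/
lemma IsFrostmanConstant.exponent_pos [Nonempty X] {c : ℝ} (h : IsFrostmanConstant X s c)
    (hs : 0 ≤ s) (hc : 0 < c) : 0 < s := by
  obtain ⟨x⟩ := ‹Nonempty X›
  refine hs.lt_of_ne fun hs0 => ?_
  subst hs0
  obtain ⟨m, hm, -, hball⟩ := h {x} Bornology.isBounded_singleton (measurableSet_singleton x)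
    (by simp)
  have hnull : ∀ n : ℕ, m (closedBall x (n + 1)) = 0 := fun n =>
    nonpos_iff_eq_zero.mp <| (hball x _ n.cast_add_one_pos).trans_eq <| by
      rw [hContent_zero_eq_top, ENNReal.mul_top (ENNReal.ofReal_pos.mpr hc).ne', ENNReal.div_top]
  have huniv : ⋃ n : ℕ, closedBall x (n + 1) = univ :=
    eq_univ_of_subset (iUnion_mono fun n => ball_subset_closedBall) (iUnion_ball_nat_succ x)
  simpa [huniv] using measure_iUnion_null hnull

end Frostman

section HeavyBalls

variable {X : Type*} [PseudoMetricSpace X] [MeasurableSpace X]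

def heavyCover (μ : Measure X) (θ : ℝ → ℝ≥0∞) (E : Set X) : Set X :=
  ⋃ (y ∈ E) (r > 0) (_ : θ r ≤ μ (closedBall y r)), ball y r

lemma isOpen_heavyCover (μ : Measure X) (θ : ℝ → ℝ≥0∞) (E : Set X) :
    IsOpen (heavyCover μ θ E) :=
  isOpen_biUnion fun _ _ => isOpen_biUnion fun _ _ => isOpen_iUnion fun _ => isOpen_ball

lemma subset_diff_heavyCover (μ : Measure X) (θ : ℝ → ℝ≥0∞) (E : Set X) :
    {x | x ∈ E ∧ ∀ y ∈ E, ∀ r : ℝ, 0 < r → x ∈ closedBall y r → μ (closedBall y r) < θ r} ⊆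
      E \ heavyCover μ θ E := by
  rintro x ⟨hxE, hlight⟩
  refine ⟨hxE, fun hx => ?_⟩
  simp only [heavyCover, mem_iUnion] at hx
  obtain ⟨y, hy, r, hr, hheavy, hxy⟩ := hx
  exact (hlight y hy r hr (ball_subset_closedBall hxy)).not_ge hheavy

lemma measure_closedBall_le_mul_inv_iInf (μ : Measure X) {E : Set X} {s : ℝ} {x : X}
    (hx : x ∈ E) {r : ℝ} (hr : 0 < r) :
    μ (closedBall x r) ≤ ENNReal.ofReal (r ^ s) *
      (⨅ (y : X) (_ : y ∈ E) (t : ℝ) (_ : 0 < t), ENNReal.ofReal (t ^ s) / μ (closedBall y t))⁻¹ :=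
  (ENNReal.le_div_iff_le_mul_inv (ENNReal.ofReal_pos.mpr (Real.rpow_pos_of_pos hr s)).ne'
    ENNReal.ofReal_ne_top).mp ((iInf₂_le x hx).trans (iInf₂_le r hr))

variable {μ m : Measure X} {θ : ℝ → ℝ≥0∞} {E : Set X} {s : ℝ} {a b L M J : ℝ≥0∞}

/-- Heaviness is tested at a radius `r' > r`, so that a heavy ball's open ball, which lies in
`heavyCover`, contains `closedBall x r`. -/
lemma smul_add_smul_closedBall_le_of_lt (hs : 0 ≤ s)
    (hθ : ∀ r > 0, θ r ≤ ENNReal.ofReal (r ^ s) * L)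
    (hm : ∀ x, ∀ r > 0, m (closedBall x r) ≤ ENNReal.ofReal (r ^ s) * M)
    (hmV : m (heavyCover μ θ E) = 0)
    (hμ : ∀ x ∈ E, ∀ r > 0, μ (closedBall x r) ≤ ENNReal.ofReal (r ^ s) * J)
    {x : X} (hx : x ∈ E) {r r' : ℝ} (hr : 0 < r) (hrr' : r < r') :
    (a • m + b • μ) (closedBall x r) ≤
      ENNReal.ofReal (r' ^ s) * max (a * M + b * L) (b * J) := by
  have hr' : 0 < r' := hr.trans hrr'
  simp only [Measure.coe_add, Measure.coe_smul, Pi.add_apply, Pi.smul_apply, smul_eq_mul]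
  rcases lt_or_ge (μ (closedBall x r')) (θ r') with hlight | hheavy
  · calc a * m (closedBall x r) + b * μ (closedBall x r)
        ≤ a * m (closedBall x r') + b * μ (closedBall x r') := by gcongr
      _ ≤ a * (ENNReal.ofReal (r' ^ s) * M) + b * (ENNReal.ofReal (r' ^ s) * L) := by
          gcongr
          · exact hm x r' hr'
          · exact hlight.le.trans (hθ r' hr')
      _ = ENNReal.ofReal (r' ^ s) * (a * M + b * L) := by ring
      _ ≤ _ := by gcongr; exact le_max_left _ _
  · have hsub : closedBall x r ⊆ heavyCover μ θ E := fun z hz => by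
      simp only [heavyCover, mem_iUnion]
      exact ⟨x, hx, r', hr', hheavy, closedBall_subset_ball hrr' hz⟩
    calc a * m (closedBall x r) + b * μ (closedBall x r)
        = b * μ (closedBall x r) := by rw [measure_mono_null hsub hmV, mul_zero, zero_add]
      _ ≤ b * (ENNReal.ofReal (r' ^ s) * J) := by
          gcongr
          exact (hμ x hx r hr).trans (by gcongr)
      _ = ENNReal.ofReal (r' ^ s) * (b * J) := by ring
      _ ≤ _ := by gcongr; exact le_max_right _ _

lemma smul_add_smul_closedBall_le (hs : 0 ≤ s)
    (hθ : ∀ r > 0, θ r ≤ ENNReal.ofReal (r ^ s) * L)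
    (hm : ∀ x, ∀ r > 0, m (closedBall x r) ≤ ENNReal.ofReal (r ^ s) * M)
    (hmV : m (heavyCover μ θ E) = 0)
    (hμ : ∀ x ∈ E, ∀ r > 0, μ (closedBall x r) ≤ ENNReal.ofReal (r ^ s) * J)
    (hfin : max (a * M + b * L) (b * J) ≠ ∞) {x : X} (hx : x ∈ E) {r : ℝ} (hr : 0 < r) :
    (a • m + b • μ) (closedBall x r) ≤ ENNReal.ofReal (r ^ s) * max (a * M + b * L) (b * J) := by
  have hcont : ContinuousAt (fun t : ℝ => ENNReal.ofReal (t ^ s) * max (a * M + b * L) (b * J)) r :=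
    ENNReal.Tendsto.mul_const (ENNReal.continuous_ofReal.continuousAt.comp
      (Real.continuousAt_rpow_const _ s (Or.inl hr.ne'))) (Or.inr hfin)
  apply le_of_forall_gt_of_continuousWithinAt hcont.continuousWithinAt
  exact fun _ hrr' => smul_add_smul_closedBall_le_of_lt hs hθ hm hmV hμ hx hr hrr'

end HeavyBalls

section SingularValue

variable {d : ℕ} {s : ℝ} {E : Set (EuclideanSpace ℝ (Fin d))}

lemma inv_phi_le_of_forall_closedBall_le {ν : Measure (EuclideanSpace ℝ (Fin d))}
    (hν : IsProbabilityMeasure ν) (hνE : ν Eᶜ = 0) {k : ℝ≥0∞}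
    (h : ∀ x ∈ E, ∀ r > 0, ν (closedBall x r) ≤ ENNReal.ofReal (r ^ s) * k) :
    (phi s E)⁻¹ ≤ k := by
  rw [← ENNReal.inv_le_iff_inv_le]
  refine le_iSup₂_of_le ν hν (le_iSup_of_le hνE (le_iInf₂ fun x hx => le_iInf₂ fun r hr => ?_))
  rw [ENNReal.le_div_iff_le_mul_inv (ENNReal.ofReal_pos.mpr (Real.rpow_pos_of_pos hr s)).ne'
    ENNReal.ofReal_ne_top, inv_inv]
  exact h x hx r hr

lemma inv_phi_le_of_mixture (hs : 0 ≤ s) {μ m : Measure (EuclideanSpace ℝ (Fin d))}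
    [IsProbabilityMeasure μ] [IsProbabilityMeasure m] (hμE : μ Eᶜ = 0) {θ : ℝ → ℝ≥0∞}
    (hmK : m (E \ heavyCover μ θ E)ᶜ = 0) {η : ℝ} (hη₀ : 0 ≤ η) (hη₁ : η ≤ 1) {L M J : ℝ≥0∞}
    (hθ : ∀ r > 0, θ r ≤ ENNReal.ofReal (r ^ s) * L)
    (hm : ∀ x, ∀ r > 0, m (closedBall x r) ≤ ENNReal.ofReal (r ^ s) * M)
    (hμ : ∀ x ∈ E, ∀ r > 0, μ (closedBall x r) ≤ ENNReal.ofReal (r ^ s) * J)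
    (hfin : max (ENNReal.ofReal η * M + ENNReal.ofReal (1 - η) * L)
      (ENNReal.ofReal (1 - η) * J) ≠ ∞) :
    (phi s E)⁻¹ ≤
      max (ENNReal.ofReal η * M + ENNReal.ofReal (1 - η) * L) (ENNReal.ofReal (1 - η) * J) := by
  have hmV : m (heavyCover μ θ E) = 0 :=
    measure_mono_null (fun _ hz hzK => hzK.2 hz : heavyCover μ θ E ⊆ (E \ heavyCover μ θ E)ᶜ) hmK
  have hmE : m Eᶜ = 0 := measure_mono_null (compl_subset_compl.mpr sdiff_subset) hmK
  exact inv_phi_le_of_forall_closedBall_le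
    (isProbabilityMeasure_ofReal_smul_add (m := m) (μ := μ) hη₀ hη₁) (by simp [hmE, hμE])
    fun x hx r hr => smul_add_smul_closedBall_le hs hθ hm hmV hμ hfin hx hr

lemma light_ball_rate_lt {φ H : ℝ≥0∞} {c ε η : ℝ} (hc : 0 < c) (hε₀ : 0 ≤ ε) (hε₁ : ε ≤ 1)
    (hη₀ : 0 < η) (hη₁ : η ≤ 1) (hφ : φ ≠ 0)
    (hH : φ / ENNReal.ofReal (c * (1 - ε + ε / η)) < H) :
    ENNReal.ofReal η * (ENNReal.ofReal c * H)⁻¹ + ENNReal.ofReal (1 - η) *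
      (ENNReal.ofReal (1 - ε) * φ⁻¹) < φ⁻¹ := by
  set T := 1 - ε + ε / η
  have hc₀ : ENNReal.ofReal c ≠ 0 := (ENNReal.ofReal_pos.mpr hc).ne'
  have hcH : φ / ENNReal.ofReal T < ENNReal.ofReal c * H :=
    calc φ / ENNReal.ofReal T = ENNReal.ofReal c * (φ / ENNReal.ofReal (c * T)) := by
          rw [ENNReal.ofReal_mul hc.le, ← mul_div_assoc,
            ENNReal.mul_div_mul_left _ _ hc₀ ENNReal.ofReal_ne_top]
      _ < ENNReal.ofReal c * H := ENNReal.mul_lt_mul_right hc₀ ENNReal.ofReal_ne_top hH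
  have hinv : (ENNReal.ofReal c * H)⁻¹ < ENNReal.ofReal T * φ⁻¹ := by
    rw [← div_eq_mul_inv, ← ENNReal.inv_div (Or.inl ENNReal.ofReal_ne_top) (Or.inr hφ)]
    exact ENNReal.inv_lt_inv.mpr hcH
  have hT : 0 ≤ T := add_nonneg (sub_nonneg.mpr hε₁) (div_nonneg hε₀ hη₀.le)
  have hweights : η * T + (1 - η) * (1 - ε) = 1 := by
    simp only [T]
    field_simp
    ring
  calc _ < ENNReal.ofReal η * (ENNReal.ofReal T * φ⁻¹) +
        ENNReal.ofReal (1 - η) * (ENNReal.ofReal (1 - ε) * φ⁻¹) := by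
        refine ENNReal.add_lt_add_right (by finiteness) ?_
        exact ENNReal.mul_lt_mul_right (ENNReal.ofReal_pos.mpr hη₀).ne' ENNReal.ofReal_ne_top hinv
    _ = ENNReal.ofReal (η * T + (1 - η) * (1 - ε)) * φ⁻¹ := by
        rw [ENNReal.ofReal_add (by positivity) (mul_nonneg (by linarith) (by linarith)),
          ENNReal.ofReal_mul hη₀.le, ENNReal.ofReal_mul (by linarith)]
        ring
    _ = φ⁻¹ := by rw [hweights, ENNReal.ofReal_one, one_mul]

end SingularValue

/-- Lemma 2.2: under a near-optimality assumption on `μ` for `φ^s(E)` and a Frostman-type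
property with constant `c`, the set `A` of points seen only by "light" balls has small
Hausdorff content: `H^s_∞(A) ≤ φ^s(E) / (c(1 - ε + ε/η))`. -/
theorem content_of_light_points_small
    (d : ℕ) (s : ℝ) (hs : 0 ≤ s)
    (E : Set (EuclideanSpace ℝ (Fin d)))
    (hBdd : Bornology.IsBounded E) (hBorel : MeasurableSet E)
    (hphiPos : 0 < phi s E)
    (ε η : ℝ) (hε : ε ∈ Set.Ioo (0 : ℝ) 1) (hη : η ∈ Set.Ioo (0 : ℝ) 1)
    (μ : Measure (EuclideanSpace ℝ (Fin d)))
    (hprob : IsProbabilityMeasure μ) (hcarried : μ Eᶜ = 0)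
    (hnearopt : phi s E * ENNReal.ofReal (1 - η) <
      ⨅ (x : EuclideanSpace ℝ (Fin d)) (_ : x ∈ E) (r : ℝ) (_ : 0 < r),
        ENNReal.ofReal (r ^ s) / μ (closedBall x r))
    (A : Set (EuclideanSpace ℝ (Fin d)))
    (hA : A = {x | x ∈ E ∧ ∀ y ∈ E, ∀ r : ℝ, 0 < r → x ∈ closedBall y r →
      μ (closedBall y r) < ENNReal.ofReal ((1 - ε) * r ^ s) / phi s E})
    (c : ℝ) (hc : 0 < c)
    (hfrostman : ∀ K : Set (EuclideanSpace ℝ (Fin d)),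
      Bornology.IsBounded K → MeasurableSet K → 0 < μH[s] K →
      ∃ m : Measure (EuclideanSpace ℝ (Fin d)), IsProbabilityMeasure m ∧ m Kᶜ = 0 ∧
        ∀ (x : EuclideanSpace ℝ (Fin d)) (r : ℝ), 0 < r →
          m (closedBall x r) ≤ ENNReal.ofReal (r ^ s) / (ENNReal.ofReal c * hContent s K)) :
    hContent s A ≤ phi s E / ENNReal.ofReal (c * (1 - ε + ε / η)) := by
  obtain ⟨hε₀, hε₁⟩ := hε
  obtain ⟨hη₀, hη₁⟩ := hη
  have hs₀ : 0 < s := IsFrostmanConstant.exponent_pos hfrostman hs hc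
  set φ := phi s E
  set θ : ℝ → ℝ≥0∞ := fun r => ENNReal.ofReal ((1 - ε) * r ^ s) / φ
  set K := E \ heavyCover μ θ E
  have hAK : A ⊆ K := hA ▸ subset_diff_heavyCover μ θ E
  by_contra! hAc
  have hKc : φ / ENNReal.ofReal (c * (1 - ε + ε / η)) < hContent s K :=
    hAc.trans_le (hContent_mono s hAK)
  obtain ⟨m, hm, hmK, hmball⟩ := hfrostman K (hBdd.subset sdiff_subset)
    (hBorel.diff (isOpen_heavyCover μ θ E).measurableSet)
    (hausdorffMeasure_pos_of_hContent_pos hs₀ (zero_le.trans_lt hKc))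
  have hθ : ∀ r > 0, θ r ≤ ENNReal.ofReal (r ^ s) * (ENNReal.ofReal (1 - ε) * φ⁻¹) :=
    fun r _ => le_of_eq <| by
      simp only [θ]
      rw [ENNReal.ofReal_mul (sub_nonneg.mpr hε₁.le), div_eq_mul_inv]
      ring
  have hrate := max_lt (light_ball_rate_lt hc hε₀.le hε₁.le hη₀ hη₁.le hphiPos.ne' hKc)
    (ENNReal.mul_inv_lt_inv_of_mul_lt (ENNReal.ofReal_pos.mpr (sub_pos.mpr hη₁)).ne'
      ENNReal.ofReal_ne_top hnearopt)
  exact hrate.not_ge <| inv_phi_le_of_mixture hs hcarried hmK hη₀.le hη₁.le hθ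
    (fun x r hr => (hmball x r hr).trans_eq (div_eq_mul_inv _ _))
    (fun x hx r hr => measure_closedBall_le_mul_inv_iInf μ hx hr) hrate.ne_top
end

section
/- Let (B_i) be a sequence of balls in [0,1]^d ⊆ ℝ^d whose diameters tend to 0 and such that the Lebesgue measure of limsup_{i→∞} B_i equals 1. Then for every axis-parallel closed cube C ⊆ [0,1]^d and every ε ∈ (0,1), the union ⋃_{i : B_i ⊆ C} B_i contains (1−ε)C up to a set of Lebesgue measure zero, i.e. λ( (1−ε)C \ ⋃_{i : B_i ⊆ C} B_i ) = 0, where (1−ε)C denotes the cube with the same center as C and side length (1−ε) times that of C. -/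
open MeasureTheory Metric Set Filter ENNReal

/-!
Since `limsup B_i` has full measure in `[0,1]^d`, almost every point `y` of `(1-ε)C` lies in
infinitely many balls `B_i`. As the radii tend to `0`, one of these has radius below `εh/2`
(with `h` the half-side of `C`), so it lies within `εh` of `y` and hence, by the margin between
`(1-ε)C` and `C`, inside `C`.
-/

lemma volume_unitCube (d : ℕ) : volume (unitCube d) = 1 := by
  have hpre := (EuclideanSpace.volume_preserving_symm_measurableEquiv_toLp (Fin d)).measure_preimage
    (s := Set.univ.pi fun _ => Set.Icc (0 : ℝ) 1)
    (MeasurableSet.univ_pi fun _ => measurableSet_Icc).nullMeasurableSet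
  have hcube : unitCube d = (MeasurableEquiv.toLp 2 (Fin d → ℝ)).symm ⁻¹'
      (Set.univ.pi fun _ => Set.Icc (0 : ℝ) 1) := by
    ext y
    simp [unitCube, Pi.le_def, forall_and]
  rw [hcube, hpre, volume_pi_pi]
  simp [Real.volume_Icc]

lemma cube_subset_cube {d : ℕ} (z : EuclideanSpace ℝ (Fin d)) {h₁ h₂ : ℝ} (hle : h₁ ≤ h₂) :
    cube z h₁ ⊆ cube z h₂ :=
  fun _ hy i => (hy i).trans hle

lemma closedBall_subset_cube_s9 {d : ℕ} {z y : EuclideanSpace ℝ (Fin d)} {h' δ h : ℝ}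
    (hy : y ∈ cube z h') (hle : h' + δ ≤ h) : closedBall y δ ⊆ cube z h := by
  intro w hw i
  calc |w i - z i| ≤ |w i - y i| + |y i - z i| := abs_sub_le _ _ _
    _ ≤ dist w y + h' := add_le_add (PiLp.dist_apply_le w y i) (hy i)
    _ ≤ h := by linarith [mem_closedBall.1 hw]

lemma slimsup_subset_iUnion {X : Type*} (A : ℕ → Set X) : slimsup A ⊆ ⋃ i, A i := by
  intro y hy
  obtain ⟨i, hyi⟩ := by simpa using mem_iInter.1 hy 0
  exact mem_iUnion.2 ⟨i, hyi⟩

lemma measurableSet_slimsup {X : Type*} [MeasurableSpace X] {A : ℕ → Set X}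
    (hA : ∀ i, MeasurableSet (A i)) : MeasurableSet (slimsup A) :=
  .iInter fun _ => .iUnion fun i => .iUnion fun _ => hA i

lemma mem_iUnion_closedBall_subset_of_mem_slimsup {X : Type*} [PseudoMetricSpace X]
    {x : ℕ → X} {r : ℕ → ℝ} (hr : Tendsto r atTop (nhds 0)) {y : X}
    (hy : y ∈ slimsup fun i => closedBall (x i) (r i)) {C : Set X} {δ : ℝ} (hδ : 0 < δ)
    (hC : closedBall y δ ⊆ C) :
    y ∈ ⋃ i, ⋃ (_ : closedBall (x i) (r i) ⊆ C), closedBall (x i) (r i) := by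
  obtain ⟨n, hsmall⟩ : ∃ n, ∀ i ≥ n, r i < δ / 2 :=
    eventually_atTop.1 (hr.eventually (gt_mem_nhds (half_pos hδ)))
  obtain ⟨i, hin, hyi⟩ := by simpa using mem_iInter.1 hy n
  have hball : closedBall (x i) (r i) ⊆ closedBall y δ :=
    closedBall_subset_closedBall' (by linarith [hsmall i hin, dist_comm (x i) y])
  exact mem_iUnion₂.2 ⟨i, hball.trans hC, mem_closedBall.2 hyi⟩

theorem shrunken_cube_covered_ae_general
    (d : ℕ) (x : ℕ → EuclideanSpace ℝ (Fin d)) (r : ℕ → ℝ)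
    (hBcube : ∀ i, closedBall (x i) (r i) ⊆ unitCube d)
    (hdiam : Tendsto r atTop (nhds 0))
    (hfull : volume (slimsup fun i => closedBall (x i) (r i)) = 1) :
    ∀ (z : EuclideanSpace ℝ (Fin d)) (h : ℝ), 0 < h → cube z h ⊆ unitCube d →
      ∀ ε : ℝ, ε ∈ Set.Ioo (0 : ℝ) 1 →
        volume (cube z ((1 - ε) * h) \
          ⋃ i, ⋃ (_ : closedBall (x i) (r i) ⊆ cube z h), closedBall (x i) (r i)) = 0 := by
  intro z h hh hCsub ε hε
  set S := slimsup fun i => closedBall (x i) (r i)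
  have hSsub : S ⊆ unitCube d := (slimsup_subset_iUnion _).trans (iUnion_subset hBcube)
  have hS_ae : S =ᵐ[volume] unitCube d :=
    ae_eq_of_subset_of_measure_ge hSsub (by rw [hfull, volume_unitCube])
      (measurableSet_slimsup fun _ => measurableSet_closedBall).nullMeasurableSet
      (by simp [volume_unitCube])
  refine measure_mono_null ?_ (ae_eq_set.1 hS_ae).2
  rintro y ⟨hy, hyU⟩
  refine ⟨?_, fun hyS => hyU ?_⟩
  · exact hCsub (cube_subset_cube z (by nlinarith [hε.1]) hy)
  · exact mem_iUnion_closedBall_subset_of_mem_slimsup hdiam hyS (mul_pos hε.1 hh)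
      (closedBall_subset_cube_s9 hy (by linarith))

/-- If the balls `B_i = B(x_i, r_i) ⊆ [0,1]^d` have radii tending to `0` and
`λ(limsup B_i) = 1`, then for every axis-parallel closed cube `C ⊆ [0,1]^d` and every
`ε ∈ (0,1)` the union of those `B_i` contained in `C` covers the shrunken cube `(1-ε)C`
up to Lebesgue measure zero. -/
theorem shrunken_cube_covered_ae
    (d : ℕ) (x : ℕ → EuclideanSpace ℝ (Fin d)) (r : ℕ → ℝ)
    (hr : ∀ i, 0 < r i)
    (hBcube : ∀ i, closedBall (x i) (r i) ⊆ unitCube d)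
    (hdiam : Tendsto r atTop (nhds 0))
    (hfull : volume (slimsup fun i => closedBall (x i) (r i)) = 1) :
    ∀ (z : EuclideanSpace ℝ (Fin d)) (h : ℝ), 0 < h → cube z h ⊆ unitCube d →
      ∀ ε : ℝ, ε ∈ Set.Ioo (0 : ℝ) 1 →
        volume (cube z ((1 - ε) * h) \
          ⋃ i, ⋃ (_ : closedBall (x i) (r i) ⊆ cube z h), closedBall (x i) (r i)) = 0 :=
  shrunken_cube_covered_ae_general d x r hBcube hdiam hfull
end

section
/- There exists a countable family (B_i) of non-degenerate closed intervals contained in [0,1] such that the Lebesgue measure of limsup_{i→∞} B_i is positive, and yet for every a > 1 the following holds: if for each i the set E_i is defined as the closed interval with the same center as B_i and length (diam B_i)^a, then limsup_{i→∞} E_i = ∅. -/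
open MeasureTheory Metric Set Filter ENNReal

/-
The intervals of stage `t` are the dyadic intervals of length `2^-L_t`, `L_t = (t+4)^2`, except
those whose centre lies within `ε_u = 2^-(L_u + u + 4)` of a centre of an earlier stage `u`.
A point of `[0,1]` outside the union of the balls of radius `2ε_u` around the stage-`u` centres
(total measure at most `1/2`) lies in a kept interval at every stage, because the half-length
`2^-(L_t+1)` is at most `ε_u` for `u < t`; so the limsup has measure at least `1/2`.
For `a > 1` the shrunk interval of stage `u` has length `2^(-a L_u) ≤ ε_u` as soon as
`(u+4)(a-1) ≥ 1`, so shrunk intervals of two distinct late stages are disjoint, their centres being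
more than `ε_u` apart; since every stage is finite, no point lies in infinitely many of them.
-/

open Function

theorem mem_slimsup_iff_infinite {X : Type*} {A : ℕ → Set X} {x : X} :
    x ∈ slimsup A ↔ {i | x ∈ A i}.Infinite := by
  simp only [slimsup, mem_iInter, mem_iUnion, exists_prop]
  rw [← Nat.frequently_atTop_iff_infinite, frequently_atTop]

theorem mem_slimsup_comp_iff {ι X : Type*} {f : ℕ → ι} (hf : Injective f) (A : ι → Set X)
    {x : X} : x ∈ slimsup (fun i => A (f i)) ↔ ({v | x ∈ A v} ∩ range f).Infinite := by
  rw [mem_slimsup_iff_infinite, ← image_preimage_eq_inter_range, infinite_image_iff hf.injOn]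
  rfl

theorem exists_injective_nat_range_eq {α : Type*} {s : Set α} (hs : s.Infinite)
    (hc : s.Countable) : ∃ f : ℕ → α, Injective f ∧ range f = s := by
  have := hs.to_subtype
  have := hc.to_subtype
  obtain ⟨_⟩ := nonempty_denumerable s
  let e := (Denumerable.eqv s).symm
  exact ⟨Subtype.val ∘ e, Subtype.val_injective.comp e.injective, by
    rw [range_comp, e.range_eq_univ, image_univ, Subtype.range_coe]⟩

theorem exists_abs_odd_mul_sub_le {N : ℕ} (hN : 0 < N) {r x : ℝ} (hr : 0 < r)
    (hx : x ∈ Icc 0 (2 * N * r)) : ∃ k < N, |(2 * k + 1) * r - x| ≤ r := by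
  obtain ⟨hx0, hxN⟩ := hx
  have h2r : 0 < 2 * r := by positivity
  set m := ⌊x / (2 * r)⌋₊
  have hm : m * (2 * r) ≤ x := (le_div_iff₀ h2r).1 (Nat.floor_le (by positivity))
  have hm' : x < (m + 1) * (2 * r) := (div_lt_iff₀ h2r).1 (Nat.lt_floor_add_one _)
  refine ⟨min m (N - 1), by omega, abs_le.2 ⟨?_, ?_⟩⟩
  · rcases min_cases m (N - 1) with ⟨h, -⟩ | ⟨h, -⟩ <;> rw [h]
    · linarith
    · rw [Nat.cast_sub hN, Nat.cast_one]
      linarith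
  · have : ((min m (N - 1) : ℕ) : ℝ) ≤ m := by exact_mod_cast min_le_left _ _
    nlinarith

namespace MassTransferenceCounterexample

def slack (t : ℕ) : ℕ := t + 4

def level (t : ℕ) : ℕ := slack t ^ 2

noncomputable def radius (t : ℕ) : ℝ := (1 / 2) ^ (level t + 1)

noncomputable def exclusion (t : ℕ) : ℝ := (1 / 2) ^ (level t + slack t)

noncomputable def grid (t : ℕ) : Finset ℝ :=
  (Finset.range (2 ^ level t)).image fun k : ℕ => (2 * k + 1) * radius t

def goodCenters : Set (ℕ × ℝ) :=
  {v | v.2 ∈ grid v.1 ∧ ∀ u < v.1, ∀ c ∈ grid u, exclusion u < |v.2 - c|}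

noncomputable def removed : Set ℝ :=
  ⋃ t, ⋃ c ∈ grid t, closedBall c (2 * exclusion t)

theorem two_pow_mul_half_pow (n : ℕ) : (2 : ℝ) ^ n * (1 / 2) ^ n = 1 := by
  rw [← mul_pow]; norm_num

theorem radius_pos (t : ℕ) : 0 < radius t := by unfold radius; positivity

theorem two_mul_two_pow_level_mul_radius (t : ℕ) : 2 * 2 ^ level t * radius t = 1 := by
  rw [radius, pow_succ]
  linear_combination two_pow_mul_half_pow (level t)

theorem radius_antitone : Antitone radius := fun u t h =>
  pow_le_pow_of_le_one (by norm_num) (by norm_num) (by unfold level slack; gcongr)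

theorem radius_le_exclusion {u t : ℕ} (h : u < t) : radius t ≤ exclusion u :=
  pow_le_pow_of_le_one (by norm_num) (by norm_num) (by unfold level slack; nlinarith)

theorem two_mul_radius_rpow_le_exclusion {t : ℕ} {a : ℝ} (ha : 1 ≤ slack t * (a - 1)) :
    (2 * radius t) ^ a ≤ exclusion t := by
  have hq : (0 : ℝ) < (1 / 2) ^ slack t := by positivity
  have hq1 : ((1 : ℝ) / 2) ^ slack t ≤ 1 := pow_le_one₀ (by norm_num) (by norm_num)
  have h2r : 2 * radius t = ((1 / 2) ^ slack t) ^ (slack t : ℝ) := by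
    rw [Real.rpow_natCast, ← pow_mul, ← sq, radius, pow_succ]; unfold level; ring
  have he : exclusion t = ((1 / 2) ^ slack t) ^ ((slack t : ℝ) + 1) := by
    rw [← Nat.cast_add_one, Real.rpow_natCast, ← pow_mul, exclusion, level]
    congr 1
    ring
  rw [h2r, he, ← Real.rpow_mul hq.le]
  exact Real.rpow_le_rpow_of_exponent_ge hq hq1 (by linarith)

theorem exists_mem_grid_abs_sub_le {x : ℝ} (hx : x ∈ Icc 0 1) (t : ℕ) :
    ∃ c ∈ grid t, |c - x| ≤ radius t := by
  rw [← two_mul_two_pow_level_mul_radius t] at hx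
  obtain ⟨k, hk, hkx⟩ := exists_abs_odd_mul_sub_le (N := 2 ^ level t) (by positivity)
    (radius_pos t) (by exact_mod_cast hx)
  exact ⟨_, Finset.mem_image_of_mem _ (Finset.mem_range.2 hk), hkx⟩

theorem Icc_subset_Icc_zero_one_of_mem_grid {t : ℕ} {c : ℝ} (hc : c ∈ grid t) :
    Icc (c - radius t) (c + radius t) ⊆ Icc 0 1 := by
  obtain ⟨k, hk, rfl⟩ := Finset.mem_image.1 hc
  have hk : (k : ℝ) + 1 ≤ 2 ^ level t := by exact_mod_cast Finset.mem_range.1 hk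
  have := two_mul_two_pow_level_mul_radius t
  have := radius_pos t
  apply Icc_subset_Icc <;> nlinarith

theorem volume_stage_le (t : ℕ) :
    volume (⋃ c ∈ grid t, closedBall c (2 * exclusion t)) ≤ ENNReal.ofReal ((1 / 2) ^ t / 4) :=
  calc volume (⋃ c ∈ grid t, closedBall c (2 * exclusion t))
      ≤ ∑ c ∈ grid t, volume (closedBall c (2 * exclusion t)) := measure_biUnion_finset_le _ _
    _ = (grid t).card * ENNReal.ofReal (4 * exclusion t) := by
      simp only [Real.volume_closedBall, Finset.sum_const, nsmul_eq_mul]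
      ring_nf
    _ ≤ (2 ^ level t : ℕ) * ENNReal.ofReal (4 * exclusion t) := by
      gcongr; exact_mod_cast Finset.card_image_le.trans (Finset.card_range _).le
    _ = ENNReal.ofReal ((1 / 2) ^ t / 4) := by
      rw [← ENNReal.ofReal_natCast, ← ENNReal.ofReal_mul (by positivity)]
      congr 1
      rw [exclusion, pow_add, slack, Nat.cast_pow, Nat.cast_ofNat]
      linear_combination ((1 / 2 : ℝ) ^ t / 4) * two_pow_mul_half_pow (level t)

theorem volume_removed_lt_one : volume removed < 1 :=
  calc volume removed
      ≤ ∑' t, volume (⋃ c ∈ grid t, closedBall c (2 * exclusion t)) := measure_iUnion_le _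
    _ ≤ ∑' t, ENNReal.ofReal ((1 / 2) ^ t / 4) := ENNReal.tsum_le_tsum volume_stage_le
    _ = ENNReal.ofReal (1 / 2) := by
      rw [← ENNReal.ofReal_tsum_of_nonneg (fun t => by positivity)
        (summable_geometric_two.div_const 4), tsum_div_const, tsum_geometric_two]
      norm_num
    _ < 1 := ENNReal.ofReal_lt_one.2 (by norm_num)

theorem volume_Icc_diff_removed_pos : 0 < volume (Icc (0 : ℝ) 1 \ removed) := by
  have h : volume removed < volume (Icc (0 : ℝ) 1) := by
    simpa only [Real.volume_Icc, sub_zero, ENNReal.ofReal_one] using volume_removed_lt_one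
  exact (tsub_pos_of_lt h).trans_le le_measure_sdiff

theorem finite_goodCenters_fst_le (T : ℕ) : {v ∈ goodCenters | v.1 ≤ T}.Finite :=
  ((finite_Iic T).biUnion fun t _ => (finite_singleton t).prod (grid t).finite_toSet).subset
    fun v hv => mem_iUnion₂.2 ⟨v.1, hv.2, mem_prod.2 ⟨rfl, hv.1.1⟩⟩

theorem countable_goodCenters : goodCenters.Countable :=
  (countable_iUnion fun T => (finite_goodCenters_fst_le T).countable).mono
    fun v hv => mem_iUnion.2 ⟨v.1, mem_sep hv (le_refl v.1)⟩

theorem exists_goodCenter_abs_sub_le {x : ℝ} (hx : x ∈ Icc 0 1 \ removed) (t : ℕ) :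
    ∃ c, (t, c) ∈ goodCenters ∧ |c - x| ≤ radius t := by
  obtain ⟨c, hc, hcx⟩ := exists_mem_grid_abs_sub_le hx.1 t
  refine ⟨c, ⟨hc, fun u hut c' hc' => ?_⟩, hcx⟩
  by_contra! hle
  refine hx.2 (mem_iUnion.2 ⟨u, mem_iUnion₂.2 ⟨c', hc', ?_⟩⟩)
  rw [mem_closedBall, Real.dist_eq]
  calc |x - c'| ≤ |x - c| + |c - c'| := abs_sub_le x c c'
    _ ≤ radius t + exclusion u := add_le_add (abs_sub_comm x c ▸ hcx) hle
    _ ≤ 2 * exclusion u := by linarith [radius_le_exclusion hut]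

theorem infinite_goodCenters_abs_sub_le {x : ℝ} (hx : x ∈ Icc 0 1 \ removed) :
    ({v | |v.2 - x| ≤ radius v.1} ∩ goodCenters).Infinite := by
  choose c hc using exists_goodCenter_abs_sub_le hx
  exact infinite_of_injective_forall_mem (f := fun t => (t, c t))
    (fun t s h => congrArg Prod.fst h) fun t => ⟨(hc t).2, (hc t).1⟩

theorem lt_abs_sub_of_abs_sub_le {a : ℝ} {u t : ℕ} {c c' x : ℝ}
    (ha : 1 ≤ slack u * (a - 1)) (hut : u < t) (hc : c ∈ grid u) (hc' : (t, c') ∈ goodCenters)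
    (hx : |c - x| ≤ (2 * radius u) ^ a / 2) : (2 * radius t) ^ a / 2 < |c' - x| := by
  have ha0 : 0 ≤ a := by nlinarith [(Nat.cast_nonneg (slack u) : (0 : ℝ) ≤ slack u)]
  have hmono : (2 * radius t) ^ a ≤ (2 * radius u) ^ a :=
    Real.rpow_le_rpow (by linarith [radius_pos t]) (by linarith [radius_antitone hut.le]) ha0
  have htri : |c' - c| ≤ |c' - x| + |x - c| := abs_sub_le c' x c
  linarith [hc'.2 u hut c hc, two_mul_radius_rpow_le_exclusion ha, abs_sub_comm x c]

theorem finite_goodCenters_abs_sub_le_rpow {a : ℝ} (ha : 1 < a) (x : ℝ) :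
    ({v | |v.2 - x| ≤ (2 * radius v.1) ^ a / 2} ∩ goodCenters).Finite := by
  refine not_infinite.1 fun hinf => ?_
  obtain ⟨M, hM⟩ := exists_nat_ge (1 / (a - 1))
  rw [div_le_iff₀ (by linarith)] at hM
  obtain ⟨v, ⟨hvx, hv⟩, hvM⟩ := hinf.exists_notMem_finite (finite_goodCenters_fst_le M)
  obtain ⟨w, ⟨hwx, hw⟩, hwv⟩ := hinf.exists_notMem_finite (finite_goodCenters_fst_le v.1)
  have hMv : M ≤ slack v.1 := by unfold slack; grind
  have hvw : v.1 < w.1 := by grind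
  have hslack : 1 ≤ slack v.1 * (a - 1) := by nlinarith [(Nat.cast_le (α := ℝ)).2 hMv]
  exact (lt_abs_sub_of_abs_sub_le hslack hvw hv.1 hw hvx).not_ge hwx

end MassTransferenceCounterexample

/-- **Example showing full measure cannot be relaxed to positive measure.**
There is a countable family of non-degenerate closed intervals `B_i ⊆ [0,1]` with
`λ(limsup B_i) > 0`, such that for every `a > 1`, letting `E_i` be the closed interval
with the same center as `B_i` and length `(diam B_i)^a`, one has `limsup E_i = ∅`. -/
theorem positive_measure_not_sufficient :
    ∃ (x ρ : ℕ → ℝ), (∀ i, 0 < ρ i) ∧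
      (∀ i, Set.Icc (x i - ρ i) (x i + ρ i) ⊆ Set.Icc (0 : ℝ) 1) ∧
      0 < volume (slimsup fun i => Set.Icc (x i - ρ i) (x i + ρ i)) ∧
      ∀ a : ℝ, 1 < a →
        slimsup (fun i =>
          Set.Icc (x i - (2 * ρ i) ^ a / 2) (x i + (2 * ρ i) ^ a / 2)) = ∅ := by
  open MassTransferenceCounterexample in
  obtain ⟨y, hy⟩ := nonempty_of_measure_ne_zero volume_Icc_diff_removed_pos.ne'
  obtain ⟨f, hf, hrange⟩ := exists_injective_nat_range_eq
    ((infinite_goodCenters_abs_sub_le hy).mono inter_subset_right) countable_goodCenters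
  have hgood : ∀ i, f i ∈ goodCenters := fun i => hrange ▸ mem_range_self i
  refine ⟨fun i => (f i).2, fun i => radius (f i).1, fun i => radius_pos _,
    fun i => Icc_subset_Icc_zero_one_of_mem_grid (hgood i).1, ?_, fun a ha => ?_⟩
  · refine volume_Icc_diff_removed_pos.trans_le (measure_mono fun x hx => ?_)
    rw [mem_slimsup_comp_iff hf (fun v => Icc (v.2 - radius v.1) (v.2 + radius v.1)), hrange]
    simpa only [← mem_Icc_iff_abs_le] using infinite_goodCenters_abs_sub_le hx
  · refine eq_empty_of_forall_notMem fun x hx => ?_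
    rw [mem_slimsup_comp_iff hf
      (fun v => Icc (v.2 - (2 * radius v.1) ^ a / 2) (v.2 + (2 * radius v.1) ^ a / 2)),
      hrange] at hx
    simp only [← mem_Icc_iff_abs_le] at hx
    exact hx (finite_goodCenters_abs_sub_le_rpow ha x)
end

section
/- Let s ∈ [0,d) and set m = ⌊s⌋. There exist constants 0 < c ≤ C, depending only on d and s, such that for every open ellipsoid E ⊆ ℝ^d with semiaxes α_1 ≥ α_2 ≥ … ≥ α_d > 0 one has c · α_1 α_2 ⋯ α_m · α_{m+1}^{s−m} ≤ φ^s(E) ≤ C · α_1 α_2 ⋯ α_m · α_{m+1}^{s−m}, i.e. φ^s(E) agrees with Falconer's singular value function up to multiplicative constants. -/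
open MeasureTheory Metric Set Filter ENNReal

open ProbabilityTheory

/-!
`phi` is invariant under isometries, so the ellipsoid may be taken centred at the origin with
axes along the coordinate axes. For the lower bound, the normalized Lebesgue measure on the
box with half-sides `β_j = α_j / √d`, which lies inside the ellipsoid, gives every ball of radius
`r` mass at most `∏ min (r / β_j) 1`, and this product times the singular value function of `β`
is at most `r ^ s`. For the upper bound, a grid of cubes of side `2 α_{m+1}` covers the ellipsoid
by at most `∏ (α_j / α_{m+1} + 2) ≤ 3 ^ d ∏_{j ≤ m} α_j / α_{m+1}` cubes, so any probability
measure on the ellipsoid gives one of them, hence a ball of radius `2 √d α_{m+1}` centred in the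
ellipsoid, at least the reciprocal of that number as mass.
-/

/-- Indices are `0`-based: `α m` is `α_{m+1}`, so `falconerSVF α m s = α_1 ⋯ α_m α_{m+1}^{s-m}`,
Falconer's singular value function when `m = ⌊s⌋`. -/
noncomputable def falconerSVF {d : ℕ} (α : Fin d → ℝ) (m : Fin d) (s : ℝ) : ℝ :=
  (∏ j ∈ Finset.Iio m, α j) * α m ^ (s - (m : ℕ))

section SingularValue

variable {d : ℕ} {α β : Fin d → ℝ} {m : Fin d} {s : ℝ}

lemma falconerSVF_mul (hα : ∀ j, 0 ≤ α j) (hβ : ∀ j, 0 ≤ β j) :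
    falconerSVF (fun j => α j * β j) m s = falconerSVF α m s * falconerSVF β m s := by
  simp only [falconerSVF, Finset.prod_mul_distrib, Real.mul_rpow (hα m) (hβ m)]
  ring

lemma falconerSVF_const {c : ℝ} (hc : 0 < c) : falconerSVF (fun _ => c) m s = c ^ s := by
  rw [falconerSVF, Finset.prod_const, Fin.card_Iio, ← Real.rpow_natCast, ← Real.rpow_add hc,
    add_sub_cancel]

lemma falconerSVF_const_mul {c : ℝ} (hc : 0 < c) (hα : ∀ j, 0 ≤ α j) :
    falconerSVF (fun j => c * α j) m s = c ^ s * falconerSVF α m s := by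
  rw [falconerSVF_mul (fun _ => hc.le) hα, falconerSVF_const hc]

lemma falconerSVF_pos (hα : ∀ j, 0 < α j) : 0 < falconerSVF α m s :=
  mul_pos (Finset.prod_pos fun j _ => hα j) (Real.rpow_pos_of_pos (hα m) _)

lemma prod_eq_prod_Iio_mul_prod_Ici {M : Type*} [CommMonoid M] (f : Fin d → M) :
    ∏ j, f j = (∏ j ∈ Finset.Iio m, f j) * ∏ j ∈ Finset.Ici m, f j := by
  rw [← Finset.prod_filter_mul_prod_filter_not Finset.univ (· < m)]
  simp only [not_lt, Finset.filter_gt_eq_Iio, Finset.filter_le_eq_Ici]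

lemma prod_min_one_le_falconerSVF (hα : ∀ j, 0 < α j) (hms : (m : ℕ) ≤ s)
    (hsm : s ≤ (m : ℕ) + 1) : ∏ j, min (α j) 1 ≤ falconerSVF α m s := by
  have hmin_nonneg : ∀ j, 0 ≤ min (α j) 1 := fun j => le_min (hα j).le zero_le_one
  have hhead : ∏ j ∈ Finset.Iio m, min (α j) 1 ≤ ∏ j ∈ Finset.Iio m, α j :=
    Finset.prod_le_prod (fun j _ => hmin_nonneg j) fun j _ => min_le_left _ _
  have htail : ∏ j ∈ Finset.Ici m, min (α j) 1 ≤ α m ^ (s - (m : ℕ)) := by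
    rw [← Finset.mul_prod_Ioi_eq_prod_Ici]
    calc min (α m) 1 * ∏ j ∈ Finset.Ioi m, min (α j) 1
        ≤ min (α m) 1 := mul_le_of_le_one_right (hmin_nonneg m)
          (Finset.prod_le_one (fun j _ => hmin_nonneg j) fun j _ => min_le_right _ _)
      _ ≤ α m ^ (s - (m : ℕ)) := by
        rcases le_total (α m) 1 with h | h
        · simpa [min_eq_left h] using Real.rpow_le_rpow_of_exponent_ge (hα m) h
            (show s - (m : ℕ) ≤ 1 by linarith)
        · exact (min_le_right _ _).trans (Real.one_le_rpow h (by linarith))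
  rw [prod_eq_prod_Iio_mul_prod_Ici (m := m), falconerSVF]
  exact mul_le_mul hhead htail (Finset.prod_nonneg fun j _ => hmin_nonneg j)
    (Finset.prod_nonneg fun j _ => (hα j).le)

lemma prod_max_one_eq_falconerSVF (hanti : Antitone α) (hm : α m = 1) :
    ∏ j, max (α j) 1 = falconerSVF α m s := by
  rw [prod_eq_prod_Iio_mul_prod_Ici (m := m), falconerSVF, hm, Real.one_rpow]
  congr 1
  · exact Finset.prod_congr rfl fun j hj =>
      max_eq_left (hm ▸ hanti (Finset.mem_Iio.1 hj).le)
  · exact Finset.prod_eq_one fun j hj => max_eq_right (hm ▸ hanti (Finset.mem_Ici.1 hj))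

lemma prod_min_div_one_mul_falconerSVF_le (hα : ∀ j, 0 < α j) (hms : (m : ℕ) ≤ s)
    (hsm : s ≤ (m : ℕ) + 1) {r : ℝ} (hr : 0 < r) :
    (∏ j, min (r / α j) 1) * falconerSVF α m s ≤ r ^ s := by
  calc (∏ j, min (r / α j) 1) * falconerSVF α m s
      ≤ falconerSVF (fun j => r / α j) m s * falconerSVF α m s := by
        gcongr
        · exact (falconerSVF_pos hα).le
        · exact prod_min_one_le_falconerSVF (fun j => div_pos hr (hα j)) hms hsm
    _ = r ^ s := by
        rw [← falconerSVF_mul (fun j => (div_pos hr (hα j)).le) fun j => (hα j).le]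
        simp only [div_mul_cancel₀ _ (hα _).ne']
        exact falconerSVF_const hr

lemma rpow_mul_prod_div_add_two_le (hα : ∀ j, 0 < α j) (hanti : Antitone α) :
    α m ^ s * ∏ j, (α j / α m + 2) ≤ 3 ^ d * falconerSVF α m s := by
  have hαm := hα m
  have hfactor : ∀ j, α j / α m + 2 ≤ 3 * max (α j / α m) 1 := fun j => by
    rcases le_total (α j / α m) 1 with h | h
    · rw [max_eq_right h]; linarith
    · rw [max_eq_left h]; linarith
  calc α m ^ s * ∏ j, (α j / α m + 2)
      ≤ α m ^ s * ∏ j, 3 * max (α j / α m) 1 := by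
        gcongr with j
        · exact fun j _ => add_nonneg (div_pos (hα j) hαm).le zero_le_two
        · exact hfactor j
    _ = 3 ^ d * (α m ^ s * falconerSVF (fun j => α j / α m) m s) := by
        rw [Finset.prod_mul_distrib, Finset.prod_const, Finset.card_univ, Fintype.card_fin,
          prod_max_one_eq_falconerSVF (fun i j hij => by gcongr; exact hanti hij)
            (div_self hαm.ne')]
        ring
    _ = 3 ^ d * falconerSVF α m s := by
        rw [← falconerSVF_const_mul hαm fun j => (div_pos (hα j) hαm).le]
        simp only [mul_div_cancel₀ _ hαm.ne']

end SingularValue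

lemma exists_one_le_card_mul_measure_closedBall {X ι : Type*} [PseudoMetricSpace X]
    [MeasurableSpace X] {μ : Measure X} [IsProbabilityMeasure μ] {E : Set X} (hE : μ Eᶜ = 0)
    {K : Finset ι} {A : ι → Set X} (hcover : E ⊆ ⋃ k ∈ K, A k) {r : ℝ}
    (hA : ∀ k, ∀ x ∈ A k, ∀ y ∈ A k, dist x y ≤ r) :
    ∃ x ∈ E, 1 ≤ K.card * μ (closedBall x r) := by
  have hμE : μ E = 1 := by rw [measure_congr (ae_eq_univ.2 hE), measure_univ]
  have hsum : 1 ≤ ∑ k ∈ K, μ (A k ∩ E) := by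
    calc 1 = μ E := hμE.symm
      _ ≤ μ (⋃ k ∈ K, A k ∩ E) := measure_mono fun x hx => by
          obtain ⟨k, hk, hxk⟩ := mem_iUnion₂.1 (hcover hx)
          exact mem_iUnion₂.2 ⟨k, hk, hxk, hx⟩
      _ ≤ ∑ k ∈ K, μ (A k ∩ E) := measure_biUnion_finset_le _ _
  have hK : K.Nonempty := Finset.nonempty_of_sum_ne_zero (one_pos.trans_le hsum).ne'
  obtain ⟨k, hk, hmax⟩ := Finset.exists_max_image K (fun k => μ (A k ∩ E)) hK
  have hbig : 1 ≤ K.card * μ (A k ∩ E) := by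
    simpa [nsmul_eq_mul] using hsum.trans (Finset.sum_le_card_nsmul _ _ _ hmax)
  obtain ⟨x, hxk, hxE⟩ := nonempty_of_measure_ne_zero
    (right_ne_zero_of_mul (one_pos.trans_le hbig).ne')
  exact ⟨x, hxE, hbig.trans (by gcongr; exact fun y hy => mem_closedBall.2 (hA k y hy.1 x hxk))⟩

section Phi

variable {d : ℕ} {s : ℝ} {E : Set (EuclideanSpace ℝ (Fin d))}

lemma le_phi_of_measure_closedBall {μ : Measure (EuclideanSpace ℝ (Fin d))}
    [IsProbabilityMeasure μ] (hE : μ Eᶜ = 0) {c : ℝ≥0∞}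
    (h : ∀ x ∈ E, ∀ r > 0, c * μ (closedBall x r) ≤ ENNReal.ofReal (r ^ s)) : c ≤ phi s E :=
  le_iSup₂_of_le μ ‹_› <| le_iSup_of_le hE <| le_iInf₂ fun x hx => le_iInf₂ fun r hr =>
    (ENNReal.le_div_iff_mul_le (Or.inr (by simp [Real.rpow_pos_of_pos hr]))
      (Or.inl (measure_ne_top μ _))).2 (h x hx r hr)

lemma phi_le_of_exists_closedBall {C : ℝ≥0∞}
    (h : ∀ μ : Measure (EuclideanSpace ℝ (Fin d)), IsProbabilityMeasure μ → μ Eᶜ = 0 →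
      ∃ x ∈ E, ∃ r > 0, ENNReal.ofReal (r ^ s) ≤ C * μ (closedBall x r)) : phi s E ≤ C :=
  iSup₂_le fun μ hμ => iSup_le fun hE => by
    obtain ⟨x, hx, r, hr, hle⟩ := h μ hμ hE
    exact iInf₂_le_of_le x hx <| iInf₂_le_of_le r hr <| ENNReal.div_le_of_le_mul hle

lemma phi_le_of_cover {ι : Type*} {K : Finset ι} {A : ι → Set (EuclideanSpace ℝ (Fin d))}
    (hcover : E ⊆ ⋃ k ∈ K, A k) {r : ℝ} (hr : 0 < r)
    (hA : ∀ k, ∀ x ∈ A k, ∀ y ∈ A k, dist x y ≤ r) :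
    phi s E ≤ ENNReal.ofReal (r ^ s) * K.card :=
  phi_le_of_exists_closedBall fun μ _ hE => by
    obtain ⟨x, hx, hbig⟩ := exists_one_le_card_mul_measure_closedBall hE hcover hA
    refine ⟨x, hx, r, hr, ?_⟩
    calc ENNReal.ofReal (r ^ s) = ENNReal.ofReal (r ^ s) * 1 := (mul_one _).symm
      _ ≤ _ := by rw [mul_assoc]; gcongr

lemma phi_image_le (e : EuclideanSpace ℝ (Fin d) ≃ᵢ EuclideanSpace ℝ (Fin d)) :
    phi s E ≤ phi s (e '' E) :=
  iSup₂_le fun μ _ => iSup_le fun hE => by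
    have hmap : ∀ S, μ.map e S = μ (e ⁻¹' S) := e.toHomeomorph.measurableEmbedding.map_apply μ
    have : IsProbabilityMeasure (μ.map e) :=
      Measure.isProbabilityMeasure_map e.continuous.measurable.aemeasurable
    refine le_iSup₂_of_le (μ.map e) ‹_› <| le_iSup_of_le ?_ ?_
    · rw [hmap, preimage_compl, e.injective.preimage_image, hE]
    · refine le_iInf₂ fun y hy => le_iInf₂ fun r hr => ?_
      obtain ⟨x, hx, rfl⟩ := hy
      rw [hmap, e.preimage_closedBall, e.symm_apply_apply]
      exact iInf₂_le_of_le x hx <| iInf₂_le r hr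

lemma phi_preimage_isometryEquiv (e : EuclideanSpace ℝ (Fin d) ≃ᵢ EuclideanSpace ℝ (Fin d)) :
    phi s (e ⁻¹' E) = phi s E := by
  refine le_antisymm ?_ ?_
  · simpa only [e.surjective.image_preimage] using phi_image_le (s := s) (E := e ⁻¹' E) e
  · simpa [← e.image_symm] using phi_image_le (s := s) (E := E) e.symm

end Phi

section Geometry

variable {d : ℕ}

def axisEllipsoid (α : Fin d → ℝ) : Set (EuclideanSpace ℝ (Fin d)) :=
  {x | ∑ j, (x j / α j) ^ 2 < 1}

def centeredBox (β : Fin d → ℝ) : Set (EuclideanSpace ℝ (Fin d)) :=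
  {x | ∀ j, x j ∈ Ioo (-β j) (β j)}

def gridCell (h : ℝ) (k : Fin d → ℤ) : Set (EuclideanSpace ℝ (Fin d)) :=
  {x | ∀ j, ⌊x j / h⌋ = k j}

variable {α β : Fin d → ℝ}

lemma abs_apply_lt_of_mem_axisEllipsoid {x : EuclideanSpace ℝ (Fin d)} (hx : x ∈ axisEllipsoid α)
    (j : Fin d) (hα : 0 < α j) : |x j| < α j := by
  have hj : (x j / α j) ^ 2 < 1 :=
    (Finset.single_le_sum (f := fun i => (x i / α i) ^ 2) (fun i _ => sq_nonneg _)
      (Finset.mem_univ j)).trans_lt hx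
  rwa [sq_lt_one_iff_abs_lt_one, abs_div, abs_of_pos hα, div_lt_one hα] at hj

lemma centeredBox_subset_axisEllipsoid [NeZero d] (hα : ∀ j, 0 < α j) :
    centeredBox (fun j => (√d)⁻¹ * α j) ⊆ axisEllipsoid α := by
  intro x hx
  have hd : (0 : ℝ) < d := by exact_mod_cast Nat.pos_of_neZero d
  have hcoord : ∀ j, (x j / α j) ^ 2 < 1 / d := fun j => by
    have habs : |x j| < (√d)⁻¹ * α j := abs_lt.2 ⟨by simpa using (hx j).1, (hx j).2⟩
    have : |x j / α j| < (√d)⁻¹ := by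
      rwa [abs_div, abs_of_pos (hα j), div_lt_iff₀ (hα j)]
    calc (x j / α j) ^ 2 = |x j / α j| ^ 2 := (sq_abs _).symm
      _ < ((√d)⁻¹) ^ 2 := by gcongr
      _ = 1 / d := by rw [inv_pow, Real.sq_sqrt hd.le, one_div]
  calc ∑ j, (x j / α j) ^ 2 < ∑ _j : Fin d, 1 / (d : ℝ) :=
        Finset.sum_lt_sum_of_nonempty Finset.univ_nonempty fun j _ => hcoord j
    _ = 1 := by simp [hd.ne']

lemma centeredBox_eq_preimage (β : Fin d → ℝ) :
    centeredBox β = WithLp.ofLp ⁻¹' univ.pi fun j => Ioo (-β j) (β j) := by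
  ext x; simp [centeredBox]

lemma measurableSet_centeredBox (β : Fin d → ℝ) : MeasurableSet (centeredBox β) := by
  rw [centeredBox_eq_preimage]
  exact (MeasurableSet.univ_pi fun _ => measurableSet_Ioo).preimage (by fun_prop)

lemma volume_centeredBox (β : Fin d → ℝ) :
    volume (centeredBox β) = ∏ j, ENNReal.ofReal (2 * β j) := by
  rw [centeredBox_eq_preimage, (PiLp.volume_preserving_ofLp (Fin d)).measure_preimage
    (MeasurableSet.univ_pi fun _ => measurableSet_Ioo).nullMeasurableSet, volume_pi_pi]
  simp only [Real.volume_Ioo, sub_neg_eq_add, two_mul]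

lemma volume_closedBall_inter_Ioo_le (a : ℝ) {b : ℝ} (hb : 0 < b) (r : ℝ) :
    volume (closedBall a r ∩ Ioo (-b) b) ≤
      ENNReal.ofReal (2 * b) * ENNReal.ofReal (min (r / b) 1) := by
  have h2r : 2 * b * (r / b) = 2 * r := by field_simp
  rw [← ENNReal.ofReal_mul (by positivity), mul_min_of_nonneg _ _ (by positivity), mul_one, h2r,
    ENNReal.ofReal_min]
  refine le_min ?_ ?_
  · exact (measure_mono inter_subset_left).trans_eq (Real.volume_closedBall a r)
  · exact (measure_mono inter_subset_right).trans_eq (by rw [Real.volume_Ioo]; ring_nf)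

lemma cond_centeredBox_closedBall_le (hβ : ∀ j, 0 < β j) (x : EuclideanSpace ℝ (Fin d)) {r : ℝ}
    (hr : 0 ≤ r) :
    volume[closedBall x r | centeredBox β] ≤ ENNReal.ofReal (∏ j, min (r / β j) 1) := by
  have hsub : centeredBox β ∩ closedBall x r ⊆
      WithLp.ofLp ⁻¹' univ.pi fun j => closedBall (x j) r ∩ Ioo (-β j) (β j) := by
    intro y ⟨hyB, hyx⟩ j _
    exact ⟨(PiLp.dist_apply_le y x j).trans (mem_closedBall.1 hyx), hyB j⟩
  have hvol_ne_zero : volume (centeredBox β) ≠ 0 := by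
    simp [volume_centeredBox, Finset.prod_eq_zero_iff, hβ]
  rw [cond_apply (measurableSet_centeredBox β), ENNReal.ofReal_prod_of_nonneg
    fun j _ => le_min (div_nonneg hr (hβ j).le) zero_le_one]
  calc (volume (centeredBox β))⁻¹ * volume (centeredBox β ∩ closedBall x r)
      ≤ (volume (centeredBox β))⁻¹ *
          (volume (centeredBox β) * ∏ j, ENNReal.ofReal (min (r / β j) 1)) := by
        gcongr
        calc volume (centeredBox β ∩ closedBall x r) ≤ _ := measure_mono hsub
          _ = ∏ j, volume (closedBall (x j) r ∩ Ioo (-β j) (β j)) := by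
            rw [(PiLp.volume_preserving_ofLp (Fin d)).measure_preimage
              (MeasurableSet.univ_pi fun _ =>
                measurableSet_closedBall.inter measurableSet_Ioo).nullMeasurableSet, volume_pi_pi]
          _ ≤ _ := by
            rw [volume_centeredBox, ← Finset.prod_mul_distrib]
            exact Finset.prod_le_prod' fun j _ => volume_closedBall_inter_Ioo_le _ (hβ j) r
    _ = ∏ j, ENNReal.ofReal (min (r / β j) 1) :=
        ENNReal.inv_mul_cancel_left hvol_ne_zero
          (volume_centeredBox β ▸ ENNReal.prod_ne_top fun _ _ => ENNReal.ofReal_ne_top)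

end Geometry

section Grid

variable {d : ℕ}

lemma dist_le_of_mem_gridCell {h : ℝ} (hh : 0 < h) {k : Fin d → ℤ} {x y : EuclideanSpace ℝ (Fin d)}
    (hx : x ∈ gridCell h k) (hy : y ∈ gridCell h k) : dist x y ≤ √d * h := by
  have hcoord : ∀ j, dist (x j) (y j) ≤ h := fun j => by
    have hxj := hx j
    have hyj := hy j
    rw [Int.floor_eq_iff, le_div_iff₀ hh, div_lt_iff₀ hh] at hxj hyj
    rw [Real.dist_eq, abs_le]
    constructor <;> linarith
  calc dist x y = √(∑ j, dist (x j) (y j) ^ 2) := EuclideanSpace.dist_eq x y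
    _ ≤ √(∑ _j : Fin d, h ^ 2) := by gcongr with j; exact hcoord j
    _ = √d * h := by simp [Real.sqrt_mul, hh.le]

lemma axisEllipsoid_subset_biUnion_gridCell {α : Fin d → ℝ} (hα : ∀ j, 0 < α j) {h : ℝ}
    (hh : 0 < h) : axisEllipsoid α ⊆
      ⋃ k ∈ Fintype.piFinset fun j => Finset.Icc ⌊-(α j / h)⌋ ⌊α j / h⌋, gridCell h k := by
  intro x hx
  refine mem_iUnion₂.2 ⟨fun j => ⌊x j / h⌋, Fintype.mem_piFinset.2 fun j => ?_, fun j => rfl⟩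
  obtain ⟨hlo, hhi⟩ := abs_lt.1 (abs_apply_lt_of_mem_axisEllipsoid hx j (hα j))
  rw [Finset.mem_Icc, ← neg_div]
  exact ⟨Int.floor_mono (div_le_div_of_nonneg_right hlo.le hh.le),
    Int.floor_mono (div_le_div_of_nonneg_right hhi.le hh.le)⟩

lemma card_Icc_floor_neg_floor_le {t : ℝ} (ht : 0 ≤ t) :
    ((Finset.Icc ⌊-t⌋ ⌊t⌋).card : ℝ) ≤ 2 * t + 2 := by
  have hle : ⌊-t⌋ ≤ ⌊t⌋ := Int.floor_mono (by linarith)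
  rw [Int.card_Icc, ← Int.cast_natCast, Int.toNat_of_nonneg (by omega)]
  push_cast
  linarith [Int.floor_le t, Int.sub_one_lt_floor (-t)]

end Grid

section Ellipsoid

variable {d : ℕ} {α : Fin d → ℝ}

lemma ofReal_le_phi_axisEllipsoid (hα : ∀ j, 0 < α j) {m : Fin d} {s : ℝ} (hms : (m : ℕ) ≤ s)
    (hsm : s ≤ (m : ℕ) + 1) :
    ENNReal.ofReal (√d ^ (-s) * falconerSVF α m s) ≤ phi s (axisEllipsoid α) := by
  have : NeZero d := ⟨m.pos.ne'⟩
  have hd : 0 < √d := Real.sqrt_pos.2 (by exact_mod_cast m.pos)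
  set β := fun j => (√d)⁻¹ * α j
  have hβ : ∀ j, 0 < β j := fun j => mul_pos (inv_pos.2 hd) (hα j)
  have hsvf : √d ^ (-s) * falconerSVF α m s = falconerSVF β m s := by
    rw [falconerSVF_const_mul (inv_pos.2 hd) fun j => (hα j).le, Real.inv_rpow hd.le,
      Real.rpow_neg hd.le]
  have : IsProbabilityMeasure volume[|centeredBox β] := by
    refine cond_isProbabilityMeasure_of_finite ?_ ?_
    · simp [volume_centeredBox, Finset.prod_eq_zero_iff, hβ]
    · exact volume_centeredBox β ▸ ENNReal.prod_ne_top fun _ _ => ENNReal.ofReal_ne_top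
  refine le_phi_of_measure_closedBall (μ := volume[|centeredBox β]) ?_ fun x _ r hr => ?_
  · rw [cond_apply (measurableSet_centeredBox β)]
    refine mul_eq_zero_of_right _ (measure_mono_null ?_ measure_empty)
    exact fun y hy => hy.2 (centeredBox_subset_axisEllipsoid hα hy.1)
  calc ENNReal.ofReal (√d ^ (-s) * falconerSVF α m s) * volume[closedBall x r | centeredBox β]
      ≤ ENNReal.ofReal (falconerSVF β m s) * ENNReal.ofReal (∏ j, min (r / β j) 1) := by
        rw [hsvf]; gcongr; exact cond_centeredBox_closedBall_le hβ x hr.le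
    _ ≤ ENNReal.ofReal (r ^ s) := by
        rw [← ENNReal.ofReal_mul (falconerSVF_pos hβ).le, mul_comm]
        exact ENNReal.ofReal_le_ofReal (prod_min_div_one_mul_falconerSVF_le hβ hms hsm hr)

lemma phi_axisEllipsoid_le (hα : ∀ j, 0 < α j) (hanti : Antitone α) (m : Fin d) (s : ℝ) :
    phi s (axisEllipsoid α) ≤ ENNReal.ofReal ((2 * √d) ^ s * 3 ^ d * falconerSVF α m s) := by
  have hαm := hα m
  have hh : 0 < 2 * α m := by positivity
  have hr : 0 < √d * (2 * α m) := mul_pos (Real.sqrt_pos.2 (by exact_mod_cast m.pos)) hh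
  calc phi s (axisEllipsoid α)
      ≤ ENNReal.ofReal ((√d * (2 * α m)) ^ s) *
          (Fintype.piFinset fun j => Finset.Icc ⌊-(α j / (2 * α m))⌋ ⌊α j / (2 * α m)⌋).card :=
        phi_le_of_cover (axisEllipsoid_subset_biUnion_gridCell hα hh) hr
          fun k _ hx _ hy => dist_le_of_mem_gridCell hh hx hy
    _ ≤ ENNReal.ofReal ((2 * √d) ^ s * (α m ^ s * ∏ j, (α j / α m + 2))) := by
        rw [← ENNReal.ofReal_natCast, ← ENNReal.ofReal_mul (Real.rpow_nonneg hr.le s)]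
        refine ENNReal.ofReal_le_ofReal ?_
        rw [Fintype.card_piFinset, Nat.cast_prod, show √d * (2 * α m) = 2 * √d * α m by ring,
          Real.mul_rpow (by positivity) hαm.le, mul_assoc]
        gcongr with j
        calc ((Finset.Icc ⌊-(α j / (2 * α m))⌋ ⌊α j / (2 * α m)⌋).card : ℝ)
            ≤ 2 * (α j / (2 * α m)) + 2 := card_Icc_floor_neg_floor_le (div_pos (hα j) hh).le
          _ = α j / α m + 2 := by field_simp
    _ ≤ ENNReal.ofReal ((2 * √d) ^ s * 3 ^ d * falconerSVF α m s) := by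
        rw [mul_assoc]
        exact ENNReal.ofReal_le_ofReal
          (mul_le_mul_of_nonneg_left (rpow_mul_prod_div_add_two_le hα hanti) (by positivity))

end Ellipsoid

lemma exists_isometryEquiv_apply_eq_inner {ι E : Type*} [Fintype ι] [NormedAddCommGroup E]
    [InnerProductSpace ℝ E] [FiniteDimensional ℝ E] (z : E) {u : ι → E} (hu : Orthonormal ℝ u)
    (hcard : Fintype.card ι = Module.finrank ℝ E) :
    ∃ e : E ≃ᵢ EuclideanSpace ℝ ι, ∀ y j, e y j = inner ℝ (y - z) (u j) := by
  let b := OrthonormalBasis.mk hu (hu.linearIndependent.span_eq_top_of_card_eq_finrank' hcard).ge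
  refine ⟨(IsometryEquiv.subRight z).trans b.repr.toIsometryEquiv, fun y j => ?_⟩
  simp [b, OrthonormalBasis.repr_apply_apply, inner_sub_right, real_inner_comm]

/-- **`φ^s` generalizes Falconer's singular value function.** For `s ∈ [0,d)`,
`m = ⌊s⌋`, there are constants `0 < c ≤ C` depending only on `d` and `s` such that for
every open ellipsoid `E ⊆ ℝ^d` with semiaxes `α_1 ≥ … ≥ α_d > 0`,
`c·α_1⋯α_m·α_{m+1}^{s-m} ≤ φ^s(E) ≤ C·α_1⋯α_m·α_{m+1}^{s-m}`. -/
theorem phi_comparable_falconer_singular_value_function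
    (d : ℕ) (s : ℝ) (hs0 : 0 ≤ s) (hsd : s < (d : ℝ)) :
    ∃ c C : ℝ, 0 < c ∧ c ≤ C ∧
      ∀ (z : EuclideanSpace ℝ (Fin d)) (u : Fin d → EuclideanSpace ℝ (Fin d)),
        Orthonormal ℝ u →
        ∀ α : Fin d → ℝ, (∀ j, 0 < α j) → Antitone α →
          ∀ E : Set (EuclideanSpace ℝ (Fin d)),
            E = {y | ∑ j : Fin d, ((inner ℝ (y - z) (u j) : ℝ) / α j) ^ 2 < 1} →
            ENNReal.ofReal (c *
                ((∏ j ∈ Finset.univ.filter fun j : Fin d => (j : ℕ) < ⌊s⌋₊, α j) *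
                  α ⟨⌊s⌋₊, (Nat.floor_lt hs0).2 hsd⟩ ^ (s - (⌊s⌋₊ : ℝ)))) ≤ phi s E ∧
            phi s E ≤ ENNReal.ofReal (C *
                ((∏ j ∈ Finset.univ.filter fun j : Fin d => (j : ℕ) < ⌊s⌋₊, α j) *
                  α ⟨⌊s⌋₊, (Nat.floor_lt hs0).2 hsd⟩ ^ (s - (⌊s⌋₊ : ℝ)))) := by
  set m : Fin d := ⟨⌊s⌋₊, (Nat.floor_lt hs0).2 hsd⟩
  have hd : 1 ≤ √d := Real.one_le_sqrt.2 (by exact_mod_cast m.pos)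
  refine ⟨√d ^ (-s), (2 * √d) ^ s * 3 ^ d, by positivity, ?_, ?_⟩
  · calc √d ^ (-s) ≤ 1 := Real.rpow_le_one_of_one_le_of_nonpos hd (by linarith)
      _ ≤ (2 * √d) ^ s * 3 ^ d := one_le_mul_of_one_le_of_one_le
        (Real.one_le_rpow (by linarith) hs0) (one_le_pow₀ (by norm_num))
  intro z u hu α hα hanti E hE
  obtain ⟨e, he⟩ := exists_isometryEquiv_apply_eq_inner z hu (by simp)
  have hEe : E = e ⁻¹' axisEllipsoid α := by simp [hE, axisEllipsoid, he]
  have hsvf : (∏ j ∈ Finset.univ.filter fun j : Fin d => (j : ℕ) < ⌊s⌋₊, α j) *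
      α m ^ (s - (⌊s⌋₊ : ℝ)) = falconerSVF α m s := by
    rw [falconerSVF, ← Finset.filter_gt_eq_Iio]; rfl
  rw [hsvf, hEe, phi_preimage_isometryEquiv]
  exact ⟨ofReal_le_phi_axisEllipsoid hα (Nat.floor_le hs0) (Nat.lt_floor_add_one s).le,
    phi_axisEllipsoid_le hα hanti m s⟩
end
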